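/- arXiv:1409.1329 — 9 statements merged into one kernel-verified Lean document; each statement's English description precedes it below -/
import Mathlib

section
/- Let (A, α) be a unital Kreĭn C*-algebra with fundamental symmetry α. Then the odd part A₋ = {x ∈ A : α(x) = −x} is a norm-closed subspace of A with A₊·A₋ ⊆ A₋ and A₋·A₊ ⊆ A₋, and for all x, y, z ∈ A₋: (i) x^†·y ∈ A₊ and x·y^† ∈ A₊; (ii) x^†·x is a positive element of the C*-algebra (A, †), i.e. it is fixed by † and its spectrum is contained in the nonnegative reals; (iii) x^†·x = 0 implies x = 0; (iv) ‖x‖² = ‖x^†·x‖; (v) the imprimitivity identity (x·y^†)·z = x·(y^†·z) holds. Hence A₋ is a unital Hilbert C*-bimodule over the C*-algebra A₊ with inner products ⟨x|y⟩_{A₊} = x^†·y and _{A₊}⟨x|y⟩ = x·y^†. -/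
/-!
The involution `x† := star (α x)` turns `A`, with its norm and product unchanged, into a
C⋆-algebra `A†`: the hypothesis on `α` is exactly the C⋆-identity `‖x† * x‖ = ‖x‖ ^ 2`. Since `α`
commutes with `†` it is a ⋆-automorphism of `A†`, hence isometric, so `A₋ = ker (α + 1)` is
closed; and `x† * x` is positive in `A†`, so its spectrum lies in `[0, ∞)`. The remaining claims
are sign computations with `α x = -x`.
-/

open scoped ComplexOrder

structure KreinSymmetry (A : Type*) [NormedRing A] [NormedAlgebra ℂ A] [StarRing A]
    [StarModule ℂ A] where
  α : A ≃⋆ₐ[ℂ] A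
  involutive : Function.Involutive α
  norm_apply_star_mul_self : ∀ x : A, ‖α (star x) * x‖ = ‖x‖ ^ 2

namespace KreinSymmetry

variable {A : Type*} [NormedRing A] [NormedAlgebra ℂ A] [StarRing A] [StarModule ℂ A]
  (σ : KreinSymmetry A)

/-- `A` with the C⋆-involution `x† := star (σ.α x)`. -/
def Dagger (_ : KreinSymmetry A) : Type _ := A

instance : NormedRing σ.Dagger := inferInstanceAs (NormedRing A)

instance : NormedAlgebra ℂ σ.Dagger := inferInstanceAs (NormedAlgebra ℂ A)

instance [CompleteSpace A] : CompleteSpace σ.Dagger := inferInstanceAs (CompleteSpace A)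

instance : StarRing σ.Dagger where
  star x := (star (σ.α x) : A)
  star_involutive := show ∀ x : A, star (σ.α (star (σ.α x))) = x from fun x => by
    rw [map_star, σ.involutive, star_star]
  star_mul := show ∀ x y : A, star (σ.α (x * y)) = star (σ.α y) * star (σ.α x) from fun x y => by
    rw [map_mul, star_mul]
  star_add := show ∀ x y : A, star (σ.α (x + y)) = star (σ.α x) + star (σ.α y) from fun x y => by
    rw [map_add, star_add]

instance : StarModule ℂ σ.Dagger where
  star_smul := show ∀ (c : ℂ) (x : A), star (σ.α (c • x)) = star c • star (σ.α x) from
    fun c x => by rw [map_smul, star_smul]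

instance : CStarRing σ.Dagger where
  norm_mul_self_le := show ∀ x : A, ‖x‖ * ‖x‖ ≤ ‖star (σ.α x) * x‖ from fun x => by
    rw [← map_star, σ.norm_apply_star_mul_self, sq]

instance [CompleteSpace A] : CStarAlgebra σ.Dagger where

noncomputable instance [CompleteSpace A] : PartialOrder σ.Dagger := CStarAlgebra.spectralOrder _

instance [CompleteSpace A] : StarOrderedRing σ.Dagger := CStarAlgebra.spectralOrderedRing _

def daggerStarAlgEquiv : σ.Dagger ≃⋆ₐ[ℂ] σ.Dagger where
  toFun := σ.α
  invFun := σ.α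
  left_inv := σ.involutive
  right_inv := σ.involutive
  map_mul' := map_mul σ.α
  map_add' := map_add σ.α
  map_smul' := map_smul σ.α
  map_star' := show ∀ x : A, σ.α (star (σ.α x)) = star (σ.α (σ.α x)) from fun _ => map_star σ.α _

theorem norm_apply [CompleteSpace A] (x : A) : ‖σ.α x‖ = ‖x‖ :=
  StarAlgEquiv.norm_map σ.daggerStarAlgEquiv (A := σ.Dagger) x

theorem isClosed_setOf_apply_eq_neg [CompleteSpace A] : IsClosed {x : A | σ.α x = -x} :=
  isClosed_eq (AddMonoidHomClass.isometry_of_norm σ.α σ.norm_apply).continuous continuous_neg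

theorem nonneg_of_mem_spectrum_star_apply_mul_self [CompleteSpace A] (x : A) {z : ℂ}
    (hz : z ∈ spectrum ℂ (star (σ.α x) * x)) : 0 ≤ z := by
  let y : σ.Dagger := x
  have hpos : 0 ≤ star y * y := star_mul_self_nonneg y
  exact spectrum_nonneg_of_nonneg hpos (show z ∈ spectrum ℂ (star y * y) from hz)

end KreinSymmetry

/-- The odd part `A₋ = {x | α x = -x}` of a unital Kreĭn C*-algebra is a
norm-closed subspace, a bimodule over the even part, and with the inner products
`⟨x|y⟩ = x† * y`, `⟨x|y⟩' = x * y†` (where `x† = star (α x)`) it is a unital Hilbert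
C*-bimodule over `A₊` satisfying the imprimitivity-type associativity identity. -/
theorem krein_odd_part_is_hilbert_bimodule {A : Type*} [NormedRing A] [NormedAlgebra ℂ A]
    [StarRing A] [StarModule ℂ A] [CompleteSpace A]
(α : A → A)
    (hadd : ∀ x y : A, α (x + y) = α x + α y)
    (hsmul : ∀ (c : ℂ) (x : A), α (c • x) = c • α x)
    (hmul : ∀ x y : A, α (x * y) = α x * α y)
    (hstar : ∀ x : A, α (star x) = star (α x))
    (hinvol : ∀ x : A, α (α x) = x)
    (hfs : ∀ x : A, ‖α (star x) * x‖ = ‖x‖ ^ 2) :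
    IsClosed {x : A | α x = -x} ∧
    (∀ x y : A, α x = -x → α y = -y → α (x + y) = -(x + y)) ∧
    (∀ (c : ℂ) (x : A), α x = -x → α (c • x) = -(c • x)) ∧
    (∀ a x : A, α a = a → α x = -x → α (a * x) = -(a * x) ∧ α (x * a) = -(x * a)) ∧
    (∀ x y : A, α x = -x → α y = -y →
      α (star (α x) * y) = star (α x) * y ∧ α (x * star (α y)) = x * star (α y)) ∧
    (∀ x : A, α x = -x → star (α (star (α x) * x)) = star (α x) * x ∧
      ∀ z ∈ spectrum ℂ (star (α x) * x), 0 ≤ z.re ∧ z.im = 0) ∧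
    (∀ x : A, α x = -x → star (α x) * x = 0 → x = 0) ∧
    (∀ x : A, α x = -x → ‖x‖ ^ 2 = ‖star (α x) * x‖) ∧
    (∀ x y z : A, α x = -x → α y = -y → α z = -z →
      (x * star (α y)) * z = x * (star (α y) * z)) := by
  let σ : KreinSymmetry A :=
    { α := { toFun := α, invFun := α, left_inv := hinvol, right_inv := hinvol, map_mul' := hmul,
             map_add' := hadd, map_smul' := hsmul, map_star' := hstar }
      involutive := hinvol
      norm_apply_star_mul_self := hfs }
  have hα_dagger (x : A) : α (star (α x)) = star x := by rw [hstar, hinvol]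
  have hnorm_dagger_mul_self (x : A) : ‖star (α x) * x‖ = ‖x‖ ^ 2 := by rw [← hstar, hfs]
  refine ⟨σ.isClosed_setOf_apply_eq_neg,
    fun x y hx hy => by rw [hadd, hx, hy, neg_add],
    fun c x hx => by rw [hsmul, hx, smul_neg],
    fun a x ha hx => ⟨by rw [hmul, ha, hx, mul_neg], by rw [hmul, ha, hx, neg_mul]⟩,
    fun x y hx hy => ⟨?_, ?_⟩,
    fun x _ => ⟨?_, fun z hz =>
      (Complex.nonneg_iff.1 (σ.nonneg_of_mem_spectrum_star_apply_mul_self x hz)).imp_right Eq.symm⟩,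
    fun x _ hx => ?_,
    fun x _ => (hnorm_dagger_mul_self x).symm,
    fun _ _ _ _ _ _ => mul_assoc _ _ _⟩
  · rw [hmul, hα_dagger, hy, hx, star_neg, mul_neg, neg_mul]
  · rw [hmul, hx, hα_dagger, hy, star_neg, neg_mul, mul_neg]
  · rw [hmul, hα_dagger, star_mul, star_star]
  · rw [← norm_eq_zero, ← sq_eq_zero_iff, ← hnorm_dagger_mul_self, hx, norm_zero]
end

section
/- Let (A, α) be a rank-one Kreĭn C*-algebra with fundamental symmetry α, i.e. the even part A₊ and the odd part A₋ are both one-dimensional complex vector spaces. Then A is commutative. -/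
/-!
The odd part is spanned by some `q ≠ 0`. Since `star q` is again odd, `star q = s • q`, and the
C*-identity `‖star q * q‖ = ‖q‖²` (which the fundamental symmetry grants to odd elements) forces
`q * q ≠ 0`. As `q * q` is even, it spans the even part, so `A = ℂ q ⊕ ℂ q²` is generated as an
algebra by the single element `q`, hence is commutative.
-/

theorem LinearMap.exists_eq_add_of_involutive {R M : Type*} [Ring R] [Invertible (2 : R)]
    [AddCommGroup M] [Module R M] (T : M →ₗ[R] M) (hT : ∀ x, T (T x) = x) (x : M) :
    ∃ y z, T y = y ∧ T z = -z ∧ x = y + z := by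
  refine ⟨(⅟2 : R) • (x + T x), (⅟2 : R) • (x - T x), ?_, ?_, ?_⟩
  · rw [map_smul, map_add, hT, add_comm]
  · rw [map_smul, map_sub, hT, ← smul_neg, neg_sub]
  · rw [← smul_add, add_add_sub_cancel, ← two_smul R x, smul_smul, invOf_mul_self, one_smul]

theorem mul_self_ne_zero_of_star_eq_smul {R A : Type*} [NonUnitalNormedRing A] [Star A]
    [SMulZeroClass R A] [IsScalarTower R A A] {q : A} {s : R} (hq : q ≠ 0)
    (hnorm : ‖star q * q‖ = ‖q‖ ^ 2) (hs : star q = s • q) : q * q ≠ 0 := by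
  intro hqq
  rw [hs, smul_mul_assoc, hqq, smul_zero, norm_zero] at hnorm
  exact hq (norm_eq_zero.mp (pow_eq_zero_iff two_ne_zero |>.mp hnorm.symm))

theorem NonUnitalAlgebra.mul_comm_of_forall_mem_adjoin_singleton {R A : Type*} [CommSemiring R]
    [NonUnitalSemiring A] [Module R A] [IsScalarTower R A A] [SMulCommClass R A A] {q : A}
    (hq : ∀ x, x ∈ adjoin R {q}) (x y : A) : x * y = y * x :=
  commute_of_mem_adjoin_singleton_of_commute (hq y) (commute_of_mem_adjoin_self (hq x)).symm

theorem krein_rank_one_commutative_general {A : Type*} [NonUnitalNormedRing A] [NormedSpace ℂ A]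
    [IsScalarTower ℂ A A] [SMulCommClass ℂ A A] [StarRing A]
(α : A → A)
    (hadd : ∀ x y : A, α (x + y) = α x + α y)
    (hsmul : ∀ (c : ℂ) (x : A), α (c • x) = c • α x)
    (hmul : ∀ x y : A, α (x * y) = α x * α y)
    (hstar : ∀ x : A, α (star x) = star (α x))
    (hinvol : ∀ x : A, α (α x) = x)
    (hfs : ∀ x : A, ‖α (star x) * x‖ = ‖x‖ ^ 2)
    (hplus : ∃ p : A, α p = p ∧ p ≠ 0 ∧ ∀ x : A, α x = x → ∃ c : ℂ, x = c • p)
    (hminus : ∃ q : A, α q = -q ∧ q ≠ 0 ∧ ∀ x : A, α x = -x → ∃ c : ℂ, x = c • q) :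
    ∀ x y : A, x * y = y * x := by
  obtain ⟨p, -, -, hp_span⟩ := hplus
  obtain ⟨q, hq, hq0, hq_span⟩ := hminus
  obtain ⟨s, hs⟩ := hq_span (star q) (by rw [hstar, hq, star_neg])
  have hq_cstar : ‖star q * q‖ = ‖q‖ ^ 2 := by
    simpa only [hstar, hq, star_neg, neg_mul, norm_neg] using hfs q
  obtain ⟨h, hh⟩ := hp_span (q * q) (by rw [hmul, hq, neg_mul_neg])
  have hh0 : h ≠ 0 := by
    rintro rfl
    exact mul_self_ne_zero_of_star_eq_smul hq0 hq_cstar hs (by rwa [zero_smul] at hh)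
  have hp : p = h⁻¹ • (q * q) := by rw [hh, smul_smul, inv_mul_cancel₀ hh0, one_smul]
  have hq_gen : ∀ x, x ∈ NonUnitalAlgebra.adjoin ℂ {q} := by
    intro x
    let αL : A →ₗ[ℂ] A := { toFun := α, map_add' := hadd, map_smul' := hsmul }
    obtain ⟨y, z, hy, hz, rfl⟩ := αL.exists_eq_add_of_involutive hinvol x
    obtain ⟨a, rfl⟩ := hp_span y hy
    obtain ⟨b, rfl⟩ := hq_span z hz
    have hq_mem := NonUnitalAlgebra.self_mem_adjoin_singleton ℂ q
    rw [hp]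
    exact add_mem (SMulMemClass.smul_mem _ (SMulMemClass.smul_mem _ (mul_mem hq_mem hq_mem)))
      (SMulMemClass.smul_mem _ hq_mem)
  exact NonUnitalAlgebra.mul_comm_of_forall_mem_adjoin_singleton hq_gen

/-- A rank-one Kreĭn C*-algebra (both the even part
`A₊ = {x | α x = x}` and the odd part `A₋ = {x | α x = -x}` are one-dimensional complex
vector spaces) is commutative. -/
theorem krein_rank_one_commutative {A : Type*} [NonUnitalNormedRing A] [NormedSpace ℂ A]
    [IsScalarTower ℂ A A] [SMulCommClass ℂ A A] [StarRing A] [StarModule ℂ A] [CompleteSpace A]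
(α : A → A)
    (hadd : ∀ x y : A, α (x + y) = α x + α y)
    (hsmul : ∀ (c : ℂ) (x : A), α (c • x) = c • α x)
    (hmul : ∀ x y : A, α (x * y) = α x * α y)
    (hstar : ∀ x : A, α (star x) = star (α x))
    (hinvol : ∀ x : A, α (α x) = x)
    (hfs : ∀ x : A, ‖α (star x) * x‖ = ‖x‖ ^ 2)
    (hplus : ∃ p : A, α p = p ∧ p ≠ 0 ∧ ∀ x : A, α x = x → ∃ c : ℂ, x = c • p)
    (hminus : ∃ q : A, α q = -q ∧ q ≠ 0 ∧ ∀ x : A, α x = -x → ∃ c : ℂ, x = c • q) :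
    ∀ x y : A, x * y = y * x :=
  krein_rank_one_commutative_general α hadd hsmul hmul hstar hinvol hfs hplus hminus
end

section
/- Let (A, α) be a Kreĭn C*-algebra with fundamental symmetry α and let ε : A → A be an odd symmetry compatible with α. Then ε is isometric: ‖ε(x)‖ = ‖x‖ for all x ∈ A. -/
/-!
By the C*-identity `‖α(x*) x‖ = ‖x‖²` it suffices that `α(ε(x)*) ε(x) = α(x*) x`. Since
`ε(x)* = -ε(x*)` and `α` anticommutes with `ε`, the left side is `ε(α(x*)) ε(x)`; moving both
copies of `ε` onto one factor with the bimodule rules `ε(xy) = ε(x) y = x ε(y)` gives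
`ε(ε(α(x*))) x = α(x*) x`.
-/

theorem apply_star_mul_self_eq_of_odd {A : Type*} [NonUnitalRing A] [Star A] {α ε : A → A}
    (hneg : ∀ x : A, α (-x) = -α x)
    (heinvol : ∀ x : A, ε (ε x) = x)
    (hestar : ∀ x : A, ε (star x) = -star (ε x))
    (hemul_l : ∀ x y : A, ε (x * y) = ε x * y)
    (hemul_r : ∀ x y : A, ε (x * y) = x * ε y)
    (hecompat : ∀ x : A, ε (α x) = -α (ε x)) (x : A) :
    α (star (ε x)) * ε x = α (star x) * x := by
  have hstar_odd : star (ε x) = -ε (star x) := by rw [hestar, neg_neg]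
  calc α (star (ε x)) * ε x = ε (α (star x)) * ε x := by rw [hstar_odd, hneg, hecompat]
    _ = ε (ε (α (star x)) * x) := (hemul_r _ _).symm
    _ = α (star x) * x := by rw [hemul_l, heinvol]

theorem krein_odd_symmetry_isometric_general {A : Type*} [NonUnitalNormedRing A] [StarRing A]
(α : A → A)
    (hadd : ∀ x y : A, α (x + y) = α x + α y)
    (hfs : ∀ x : A, ‖α (star x) * x‖ = ‖x‖ ^ 2)
    (ε : A → A)
    (heinvol : ∀ x : A, ε (ε x) = x)
    (hestar : ∀ x : A, ε (star x) = -star (ε x))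
    (hemul_l : ∀ x y : A, ε (x * y) = ε x * y)
    (hemul_r : ∀ x y : A, ε (x * y) = x * ε y)
    (hecompat : ∀ x : A, ε (α x) = -α (ε x)) :
    ∀ x : A, ‖ε x‖ = ‖x‖ := by
  intro x
  have hneg : ∀ y : A, α (-y) = -α y := map_neg (AddMonoidHom.mk' α hadd)
  have hsq : ‖ε x‖ ^ 2 = ‖x‖ ^ 2 :=
    calc ‖ε x‖ ^ 2 = ‖α (star (ε x)) * ε x‖ := (hfs _).symm
      _ = ‖α (star x) * x‖ := by
        rw [apply_star_mul_self_eq_of_odd hneg heinvol hestar hemul_l hemul_r hecompat]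
      _ = ‖x‖ ^ 2 := hfs x
  exact (pow_left_inj₀ (norm_nonneg _) (norm_nonneg _) two_ne_zero).1 hsq

/-- An odd symmetry `ε` compatible with the fundamental symmetry `α` of a
Kreĭn C*-algebra is isometric. -/
theorem krein_odd_symmetry_isometric {A : Type*} [NonUnitalNormedRing A] [NormedSpace ℂ A]
    [IsScalarTower ℂ A A] [SMulCommClass ℂ A A] [StarRing A] [StarModule ℂ A] [CompleteSpace A]
(α : A → A)
    (hadd : ∀ x y : A, α (x + y) = α x + α y)
    (hsmul : ∀ (c : ℂ) (x : A), α (c • x) = c • α x)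
    (hmul : ∀ x y : A, α (x * y) = α x * α y)
    (hstar : ∀ x : A, α (star x) = star (α x))
    (hinvol : ∀ x : A, α (α x) = x)
    (hfs : ∀ x : A, ‖α (star x) * x‖ = ‖x‖ ^ 2)
    (ε : A → A)
    (headd : ∀ x y : A, ε (x + y) = ε x + ε y)
    (hesmul : ∀ (c : ℂ) (x : A), ε (c • x) = c • ε x)
    (heinvol : ∀ x : A, ε (ε x) = x)
    (hestar : ∀ x : A, ε (star x) = -star (ε x))
    (hemul_l : ∀ x y : A, ε (x * y) = ε x * y)
    (hemul_r : ∀ x y : A, ε (x * y) = x * ε y)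
    (hecompat : ∀ x : A, ε (α x) = -α (ε x)) :
    ∀ x : A, ‖ε x‖ = ‖x‖ :=
  krein_odd_symmetry_isometric_general α hadd hfs ε heinvol hestar hemul_l hemul_r hecompat
end

section
/- Let 𝕂 be the set of complex 2×2 matrices of the form T_{a,b} = [[a,b],[b,a]] (a, b ∈ ℂ), with the usual matrix addition, scalar multiplication and multiplication, the operator norm, and the involution T_{a,b}* := T_{conj(a), −conj(b)}. Then: (i) 𝕂 is closed under multiplication and the map T ↦ T* is a conjugate-linear antimultiplicative involution; (ii) the operator norm satisfies ‖T_{a,b}‖ = max(|a+b|, |a−b|); (iii) the map γ(T_{a,b}) := T_{a,−b} is a *-automorphism of 𝕂 with γ ∘ γ = id and ‖γ(T*)·T‖ = ‖T‖² for all T ∈ 𝕂, so (𝕂, γ) is a unital Kreĭn C*-algebra; (iv) the map ε_𝕂(T_{a,b}) := T_{b,a} is an odd symmetry: ε_𝕂 ∘ ε_𝕂 = id, ε_𝕂(T*) = −ε_𝕂(T)*, ε_𝕂(ST) = ε_𝕂(S)·T = S·ε_𝕂(T), and ε_𝕂 ∘ γ = −γ ∘ ε_𝕂. -/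
noncomputable section

open scoped Matrix.Norms.L2Operator

/-- Membership in the Kreĭn C*-algebra `𝕂` of matrices `T_{a,b} = !![a, b; b, a]`. -/
def Kmem (M : Matrix (Fin 2) (Fin 2) ℂ) : Prop :=
  M 0 0 = M 1 1 ∧ M 0 1 = M 1 0

/-- The matrix `T_{a,b} = !![a, b; b, a]`. -/
def Tmat (a b : ℂ) : Matrix (Fin 2) (Fin 2) ℂ := !![a, b; b, a]

/-- The involution of `𝕂`: `T_{a,b}* = T_{conj a, -conj b}`. -/
noncomputable def Kst (M : Matrix (Fin 2) (Fin 2) ℂ) : Matrix (Fin 2) (Fin 2) ℂ :=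
  Matrix.of fun i j => if i = j then starRingEnd ℂ (M i j) else -starRingEnd ℂ (M i j)

/-- The fundamental symmetry of `𝕂`: `γ (T_{a,b}) = T_{a,-b}`. -/
def Kgamma (M : Matrix (Fin 2) (Fin 2) ℂ) : Matrix (Fin 2) (Fin 2) ℂ :=
  Matrix.of fun i j => if i = j then M i j else -M i j

/-- The odd symmetry of `𝕂`: `ε (T_{a,b}) = T_{b,a}`. -/
def Keps (M : Matrix (Fin 2) (Fin 2) ℂ) : Matrix (Fin 2) (Fin 2) ℂ :=
  Matrix.of fun i j => M i (j + 1)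

/-
Every element of `𝕂` is some `T_{a,b}`, and the algebraic identities become identities between
pairs of complex numbers. The normalised Hadamard matrix `H = (1/√2) !![1, 1; 1, -1]` is unitary
and `T_{a,b} = H · diag(a + b, a - b) · H`, so `‖T_{a,b}‖ = max |a + b| |a - b|`. Finally
`γ(T*) = Tᴴ` for symmetric `T`, so `‖γ(T*) T‖ = ‖T‖²` is the C*-identity of the matrix algebra.
-/

open Matrix ComplexConjugate

lemma kmem_iff {M : Matrix (Fin 2) (Fin 2) ℂ} : Kmem M ↔ ∃ a b, Tmat a b = M := by
  refine ⟨fun ⟨h₀, h₁⟩ => ⟨M 0 0, M 0 1, ?_⟩, ?_⟩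
  · ext i j; fin_cases i <;> fin_cases j <;> simp [Tmat, h₀, h₁]
  · rintro ⟨a, b, rfl⟩; exact ⟨rfl, rfl⟩

lemma kmem_Tmat (a b : ℂ) : Kmem (Tmat a b) := kmem_iff.2 ⟨a, b, rfl⟩

lemma Tmat_inj {a b c d : ℂ} : Tmat a b = Tmat c d ↔ a = c ∧ b = d := by
  refine ⟨fun h => ⟨congrFun (congrFun h 0) 0, congrFun (congrFun h 0) 1⟩, ?_⟩
  rintro ⟨rfl, rfl⟩; rfl

lemma Tmat_mul_Tmat (a b c d : ℂ) :
    Tmat a b * Tmat c d = Tmat (a * c + b * d) (a * d + b * c) := by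
  ext i j; fin_cases i <;> fin_cases j <;> simp [Tmat, mul_apply, Fin.sum_univ_two] <;> ring

lemma Tmat_add_Tmat (a b c d : ℂ) : Tmat a b + Tmat c d = Tmat (a + c) (b + d) := by
  ext i j; fin_cases i <;> fin_cases j <;> simp [Tmat]

lemma smul_Tmat (c a b : ℂ) : c • Tmat a b = Tmat (c * a) (c * b) := by
  ext i j; fin_cases i <;> fin_cases j <;> simp [Tmat]

lemma neg_Tmat (a b : ℂ) : -Tmat a b = Tmat (-a) (-b) := by
  ext i j; fin_cases i <;> fin_cases j <;> simp [Tmat]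

lemma Tmat_one_zero : Tmat 1 0 = 1 := by
  ext i j; fin_cases i <;> fin_cases j <;> simp [Tmat]

lemma Kst_Tmat (a b : ℂ) : Kst (Tmat a b) = Tmat (conj a) (-conj b) := by
  ext i j; fin_cases i <;> fin_cases j <;> simp [Kst, Tmat]

lemma Kgamma_Tmat (a b : ℂ) : Kgamma (Tmat a b) = Tmat a (-b) := by
  ext i j; fin_cases i <;> fin_cases j <;> simp [Kgamma, Tmat]

lemma Keps_Tmat (a b : ℂ) : Keps (Tmat a b) = Tmat b a := by
  ext i j; fin_cases i <;> fin_cases j <;> simp [Keps, Tmat]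

section Entrywise

variable (M N : Matrix (Fin 2) (Fin 2) ℂ)

lemma Kst_Kst : Kst (Kst M) = M := by
  ext i j; by_cases h : i = j <;> simp [Kst, h]

lemma Kst_smul_add (c : ℂ) (M N : Matrix (Fin 2) (Fin 2) ℂ) : Kst (c • M + N) = conj c • Kst M + Kst N := by
  ext i j; by_cases h : i = j <;> simp [Kst, h, add_comm]

lemma Kgamma_add : Kgamma (M + N) = Kgamma M + Kgamma N := by
  ext i j; by_cases h : i = j <;> simp [Kgamma, h, add_comm]

lemma Kgamma_smul (c : ℂ) (M : Matrix (Fin 2) (Fin 2) ℂ) : Kgamma (c • M) = c • Kgamma M := by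
  ext i j; by_cases h : i = j <;> simp [Kgamma, h]

lemma Kgamma_Kgamma : Kgamma (Kgamma M) = M := by
  ext i j; by_cases h : i = j <;> simp [Kgamma, h]

lemma Kgamma_Kst : Kgamma (Kst M) = Kst (Kgamma M) := by
  ext i j; by_cases h : i = j <;> simp [Kgamma, Kst, h]

lemma Keps_Keps : Keps (Keps M) = M := by
  ext i j; fin_cases j <;> rfl

lemma Kgamma_Kst_of_isSymm (hM : M.IsSymm) : Kgamma (Kst M) = Mᴴ := by
  ext i j; by_cases h : i = j <;> simp [Kgamma, Kst, h, hM.apply i j]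

end Entrywise

section Kmem

variable {M N : Matrix (Fin 2) (Fin 2) ℂ}

lemma Kmem.isSymm (hM : Kmem M) : M.IsSymm :=
  IsSymm.ext fun i j => by fin_cases i <;> fin_cases j <;> simp [hM.1, hM.2]

lemma Kmem.mul (hM : Kmem M) (hN : Kmem N) : Kmem (M * N) := by
  obtain ⟨a, b, rfl⟩ := kmem_iff.1 hM
  obtain ⟨c, d, rfl⟩ := kmem_iff.1 hN
  rw [Tmat_mul_Tmat]; exact kmem_Tmat _ _

lemma Kmem.add (hM : Kmem M) (hN : Kmem N) : Kmem (M + N) := by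
  obtain ⟨a, b, rfl⟩ := kmem_iff.1 hM
  obtain ⟨c, d, rfl⟩ := kmem_iff.1 hN
  rw [Tmat_add_Tmat]; exact kmem_Tmat _ _

lemma Kmem.smul (c : ℂ) (hM : Kmem M) : Kmem (c • M) := by
  obtain ⟨a, b, rfl⟩ := kmem_iff.1 hM
  rw [smul_Tmat]; exact kmem_Tmat _ _

lemma kmem_one : Kmem (1 : Matrix (Fin 2) (Fin 2) ℂ) := Tmat_one_zero ▸ kmem_Tmat 1 0

lemma Kmem.Kst (hM : Kmem M) : Kmem (Kst M) := by
  obtain ⟨a, b, rfl⟩ := kmem_iff.1 hM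
  rw [Kst_Tmat]; exact kmem_Tmat _ _

lemma Kmem.Kgamma (hM : Kmem M) : Kmem (Kgamma M) := by
  obtain ⟨a, b, rfl⟩ := kmem_iff.1 hM
  rw [Kgamma_Tmat]; exact kmem_Tmat _ _

lemma Kmem.Keps (hM : Kmem M) : Kmem (Keps M) := by
  obtain ⟨a, b, rfl⟩ := kmem_iff.1 hM
  rw [Keps_Tmat]; exact kmem_Tmat _ _

lemma Kst_mul (hM : Kmem M) (hN : Kmem N) : Kst (M * N) = Kst N * Kst M := by
  obtain ⟨a, b, rfl⟩ := kmem_iff.1 hM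
  obtain ⟨c, d, rfl⟩ := kmem_iff.1 hN
  simp only [Tmat_mul_Tmat, Kst_Tmat, Tmat_inj, map_add, map_mul]
  constructor <;> ring

lemma Kgamma_mul (hM : Kmem M) (hN : Kmem N) : Kgamma (M * N) = Kgamma M * Kgamma N := by
  obtain ⟨a, b, rfl⟩ := kmem_iff.1 hM
  obtain ⟨c, d, rfl⟩ := kmem_iff.1 hN
  simp only [Tmat_mul_Tmat, Kgamma_Tmat, Tmat_inj]
  constructor <;> ring

lemma Kgamma_one : Kgamma (1 : Matrix (Fin 2) (Fin 2) ℂ) = 1 := by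
  rw [← Tmat_one_zero, Kgamma_Tmat, neg_zero]

lemma Keps_Kst (hM : Kmem M) : Keps (Kst M) = -Kst (Keps M) := by
  obtain ⟨a, b, rfl⟩ := kmem_iff.1 hM
  rw [Kst_Tmat, Keps_Tmat, Keps_Tmat, Kst_Tmat, neg_Tmat, neg_neg]

lemma Keps_Kgamma (hM : Kmem M) : Keps (Kgamma M) = -Kgamma (Keps M) := by
  obtain ⟨a, b, rfl⟩ := kmem_iff.1 hM
  rw [Kgamma_Tmat, Keps_Tmat, Keps_Tmat, Kgamma_Tmat, neg_Tmat, neg_neg]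

lemma Keps_mul_left (hM : Kmem M) (hN : Kmem N) : Keps (M * N) = Keps M * N := by
  obtain ⟨a, b, rfl⟩ := kmem_iff.1 hM
  obtain ⟨c, d, rfl⟩ := kmem_iff.1 hN
  simp only [Tmat_mul_Tmat, Keps_Tmat, Tmat_inj]
  constructor <;> ring

lemma Keps_mul_right (hM : Kmem M) (hN : Kmem N) : Keps (M * N) = M * Keps N := by
  obtain ⟨a, b, rfl⟩ := kmem_iff.1 hM
  obtain ⟨c, d, rfl⟩ := kmem_iff.1 hN
  simp only [Tmat_mul_Tmat, Keps_Tmat]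

end Kmem

lemma norm_Kgamma_Kst_mul_self {M : Matrix (Fin 2) (Fin 2) ℂ} (hM : M.IsSymm) :
    ‖Kgamma (Kst M) * M‖ = ‖M‖ ^ 2 := by
  rw [Kgamma_Kst_of_isSymm M hM, l2_opNorm_conjTranspose_mul_self, sq]

def unitaryHadamard : Matrix (Fin 2) (Fin 2) ℂ := (Real.sqrt 2 : ℂ)⁻¹ • !![1, 1; 1, -1]

lemma inv_sqrt_two_mul_self : (Real.sqrt 2 : ℂ)⁻¹ * (Real.sqrt 2 : ℂ)⁻¹ = 2⁻¹ := by
  rw [← mul_inv, ← Complex.ofReal_mul, Real.mul_self_sqrt zero_le_two, Complex.ofReal_ofNat]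

lemma unitaryHadamard_mul_self : unitaryHadamard * unitaryHadamard = 1 := by
  rw [unitaryHadamard, smul_mul_smul_comm, inv_sqrt_two_mul_self]
  ext i j; fin_cases i <;> fin_cases j <;> norm_num

lemma star_unitaryHadamard : star unitaryHadamard = unitaryHadamard := by
  ext i j; fin_cases i <;> fin_cases j <;> simp [unitaryHadamard, star_apply]

lemma unitaryHadamard_mem_unitary : unitaryHadamard ∈ unitary (Matrix (Fin 2) (Fin 2) ℂ) := by
  rw [Unitary.mem_iff, star_unitaryHadamard, unitaryHadamard_mul_self, and_self]

lemma Tmat_eq_unitaryHadamard_mul_diagonal_mul_unitaryHadamard (a b : ℂ) :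
    Tmat a b = unitaryHadamard * diagonal ![a + b, a - b] * unitaryHadamard := by
  rw [unitaryHadamard, smul_mul_assoc, mul_smul_comm, smul_mul_assoc, smul_smul,
    inv_sqrt_two_mul_self, diagonal_fin_two]
  ext i j; fin_cases i <;> fin_cases j <;> simp [Tmat] <;> ring

lemma pi_norm_fin_two (p q : ℂ) : ‖![p, q]‖ = max ‖p‖ ‖q‖ := by
  simp [Pi.norm_def, Fin.univ_succ]

lemma norm_Tmat (a b : ℂ) : ‖Tmat a b‖ = max ‖a + b‖ ‖a - b‖ := by
  rw [Tmat_eq_unitaryHadamard_mul_diagonal_mul_unitaryHadamard,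
    CStarRing.norm_mul_mem_unitary _ unitaryHadamard_mem_unitary,
    CStarRing.norm_mem_unitary_mul _ unitaryHadamard_mem_unitary, l2_opNorm_diagonal,
    pi_norm_fin_two]

/-- `𝕂 = {T_{a,b} = !![a, b; b, a] | a b : ℂ}` with the operator norm,
involution `T_{a,b}* = T_{conj a, -conj b}`, fundamental symmetry `γ (T_{a,b}) = T_{a,-b}`
and odd symmetry `ε (T_{a,b}) = T_{b,a}` is a rank-one unital symmetric Kreĭn C*-algebra. -/
theorem K_is_symmetric_krein_algebra :
    -- (i) 𝕂 is closed under the algebra operations, and * is a conjugate-linear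
    --     antimultiplicative involution
    (∀ M N, Kmem M → Kmem N → Kmem (M * N)) ∧
    (∀ M N, Kmem M → Kmem N → Kmem (M + N)) ∧
    (∀ (c : ℂ) (M), Kmem M → Kmem (c • M)) ∧
    Kmem (1 : Matrix (Fin 2) (Fin 2) ℂ) ∧
    (∀ M, Kmem M → Kmem (Kst M)) ∧
    (∀ M : Matrix (Fin 2) (Fin 2) ℂ, Kst (Kst M) = M) ∧
    (∀ M N, Kmem M → Kmem N → Kst (M * N) = Kst N * Kst M) ∧
    (∀ (c : ℂ) (M N : Matrix (Fin 2) (Fin 2) ℂ),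
      Kst (c • M + N) = starRingEnd ℂ c • Kst M + Kst N) ∧
    -- (ii) the operator norm
    (∀ a b : ℂ, ‖Tmat a b‖ = max ‖a + b‖ ‖a - b‖) ∧
    -- (iii) γ is a *-automorphism and a fundamental symmetry
    (∀ M, Kmem M → Kmem (Kgamma M)) ∧
    (∀ M N : Matrix (Fin 2) (Fin 2) ℂ, Kgamma (M + N) = Kgamma M + Kgamma N) ∧
    (∀ (c : ℂ) (M : Matrix (Fin 2) (Fin 2) ℂ), Kgamma (c • M) = c • Kgamma M) ∧
    (∀ M N, Kmem M → Kmem N → Kgamma (M * N) = Kgamma M * Kgamma N) ∧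
    Kgamma (1 : Matrix (Fin 2) (Fin 2) ℂ) = 1 ∧
    (∀ M : Matrix (Fin 2) (Fin 2) ℂ, Kgamma (Kst M) = Kst (Kgamma M)) ∧
    (∀ M : Matrix (Fin 2) (Fin 2) ℂ, Kgamma (Kgamma M) = M) ∧
    (∀ M, Kmem M → ‖Kgamma (Kst M) * M‖ = ‖M‖ ^ 2) ∧
    -- (iv) ε is an odd symmetry
    (∀ M, Kmem M → Kmem (Keps M)) ∧
    (∀ M : Matrix (Fin 2) (Fin 2) ℂ, Keps (Keps M) = M) ∧
    (∀ M, Kmem M → Keps (Kst M) = -Kst (Keps M)) ∧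
    (∀ M N, Kmem M → Kmem N → Keps (M * N) = Keps M * N ∧ Keps (M * N) = M * Keps N) ∧
    (∀ M, Kmem M → Keps (Kgamma M) = -Kgamma (Keps M)) :=
  ⟨fun _ _ => Kmem.mul, fun _ _ => Kmem.add, fun c _ => Kmem.smul c, kmem_one, fun _ => Kmem.Kst,
    Kst_Kst, fun _ _ => Kst_mul, Kst_smul_add, norm_Tmat,
    fun _ => Kmem.Kgamma, Kgamma_add, Kgamma_smul, fun _ _ => Kgamma_mul,
    Kgamma_one, Kgamma_Kst, Kgamma_Kgamma, fun _ hM => norm_Kgamma_Kst_mul_self hM.isSymm,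
    fun _ => Kmem.Keps, Keps_Keps, fun _ => Keps_Kst,
    fun _ _ hM hN => ⟨Keps_mul_left hM hN, Keps_mul_right hM hN⟩, fun _ => Keps_Kgamma⟩
end
end

section
/- Let M be a compact Hausdorff topological space and let (K, γ) be a unital Kreĭn C*-algebra with fundamental symmetry γ. Then the space C(M, K) of continuous functions from M to K, with pointwise operations, pointwise involution f*(x) := f(x)*, and the supremum norm ‖f‖ = sup_{x ∈ M} ‖f(x)‖, is a unital Banach *-algebra, and the map φ_C : C(M, K) → C(M, K) defined by φ_C(f) := γ ∘ f is a fundamental symmetry for it: φ_C is a *-automorphism, φ_C ∘ φ_C = id, and ‖φ_C(f*)·f‖ = ‖f‖² for all f. Hence C(M, K) is a unital Kreĭn C*-algebra. -/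
/-! Every algebraic property of `γ` transfers to `φ_C` pointwise. For the C*-type identity,
`‖φ_C(f*) f‖` is the sup of `‖γ(f(x)*) f(x)‖ = ‖f(x)‖²`, and squaring commutes with the sup of
the nonnegative numbers `‖f(x)‖`. -/

noncomputable section

/-- The map `φ_C : C(X, K) → C(X, K)`, `f ↦ γ ∘ f`, for a continuous map `γ : K → K`. -/
def PhiC {X K : Type*} [TopologicalSpace X] [TopologicalSpace K]
    (γ : K → K) (hγ : Continuous γ) : C(X, K) → C(X, K) :=
  fun f => ⟨fun x => γ (f x), hγ.comp f.continuous⟩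

theorem map_one_of_map_mul_of_involutive {M : Type*} [MulOneClass M] {γ : M → M}
    (hmul : ∀ x y, γ (x * y) = γ x * γ y) (hinvol : ∀ x, γ (γ x) = x) : γ 1 = 1 := by
  simpa [hinvol] using (hmul (γ 1) 1).symm

theorem ContinuousMap.norm_eq_sq_of_norm_apply_eq_sq {X E F : Type*} [TopologicalSpace X]
    [CompactSpace X] [SeminormedAddCommGroup E] [SeminormedAddCommGroup F]
    {f : C(X, E)} {g : C(X, F)} (h : ∀ x, ‖g x‖ = ‖f x‖ ^ 2) : ‖g‖ = ‖f‖ ^ 2 := by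
  apply le_antisymm
  · refine (g.norm_le (by positivity)).2 fun x => ?_
    rw [h x]
    exact pow_le_pow_left₀ (norm_nonneg _) (f.norm_coe_le_norm x) 2
  · have hf : ‖f‖ ≤ √‖g‖ := (f.norm_le (Real.sqrt_nonneg _)).2 fun x =>
      Real.le_sqrt_of_sq_le (h x ▸ g.norm_coe_le_norm x)
    calc ‖f‖ ^ 2 ≤ √‖g‖ ^ 2 := pow_le_pow_left₀ (norm_nonneg _) hf 2
      _ = ‖g‖ := Real.sq_sqrt (norm_nonneg _)

section PhiC

variable {X K : Type*} [TopologicalSpace X] [TopologicalSpace K] {γ : K → K} (hγ : Continuous γ)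

@[simp]
theorem PhiC_apply (f : C(X, K)) (x : X) : PhiC γ hγ f x = γ (f x) := rfl

theorem PhiC_mul [Mul K] [ContinuousMul K] (hmul : ∀ x y, γ (x * y) = γ x * γ y)
    (f g : C(X, K)) : PhiC γ hγ (f * g) = PhiC γ hγ f * PhiC γ hγ g := by
  ext x; simp [hmul]

theorem PhiC_add [Add K] [ContinuousAdd K] (hadd : ∀ x y, γ (x + y) = γ x + γ y)
    (f g : C(X, K)) : PhiC γ hγ (f + g) = PhiC γ hγ f + PhiC γ hγ g := by
  ext x; simp [hadd]

theorem PhiC_smul {R : Type*} [SMul R K] [ContinuousConstSMul R K]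
    (hsmul : ∀ (c : R) x, γ (c • x) = c • γ x) (c : R) (f : C(X, K)) :
    PhiC γ hγ (c • f) = c • PhiC γ hγ f := by
  ext x; simp [hsmul]

theorem PhiC_one [One K] (hone : γ 1 = 1) : PhiC γ hγ (1 : C(X, K)) = 1 := by
  ext x; simp [hone]

theorem PhiC_star [Star K] [ContinuousStar K] (hstar : ∀ x, γ (star x) = star (γ x))
    (f : C(X, K)) : PhiC γ hγ (star f) = star (PhiC γ hγ f) := by
  ext x; simp [hstar]

theorem PhiC_PhiC (hinvol : ∀ x, γ (γ x) = x) (f : C(X, K)) : PhiC γ hγ (PhiC γ hγ f) = f := by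
  ext x; simp [hinvol]

end PhiC

theorem norm_PhiC_star_mul_self {X : Type*} [TopologicalSpace X] [CompactSpace X] {K : Type*}
    [NormedRing K] [StarRing K] [ContinuousStar K] {γ : K → K} (hγ : Continuous γ)
    (hfs : ∀ x : K, ‖γ (star x) * x‖ = ‖x‖ ^ 2) (f : C(X, K)) :
    ‖PhiC γ hγ (star f) * f‖ = ‖f‖ ^ 2 :=
  ContinuousMap.norm_eq_sq_of_norm_apply_eq_sq fun x => hfs (f x)

theorem continuous_maps_into_krein_algebra_general
    {X : Type*} [TopologicalSpace X] [CompactSpace X]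
    {K : Type*} [NormedRing K] [NormedAlgebra ℂ K]
    [StarRing K] [CompleteSpace K] [ContinuousStar K]
    (γ : K → K)
    (hadd : ∀ x y : K, γ (x + y) = γ x + γ y)
    (hsmul : ∀ (c : ℂ) (x : K), γ (c • x) = c • γ x)
    (hmul : ∀ x y : K, γ (x * y) = γ x * γ y)
    (hstar : ∀ x : K, γ (star x) = star (γ x))
    (hinvol : ∀ x : K, γ (γ x) = x)
    (hfs : ∀ x : K, ‖γ (star x) * x‖ = ‖x‖ ^ 2)
    (hγc : Continuous γ) :
    -- C(X, K) is a unital Banach algebra for the sup-norm, with pointwise operations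
    (∀ f : C(X, K), ‖f‖ = ⨆ x : X, ‖f x‖) ∧
    (∀ f g : C(X, K), ‖f * g‖ ≤ ‖f‖ * ‖g‖) ∧
    CompleteSpace C(X, K) ∧
    -- the involution is pointwise
    (∀ (f : C(X, K)) (x : X), (star f) x = star (f x)) ∧
    -- φ_C is a unital *-automorphism with φ_C ∘ φ_C = id ...
    (∀ f g : C(X, K), PhiC γ hγc (f * g) = PhiC γ hγc f * PhiC γ hγc g) ∧
    (∀ f g : C(X, K), PhiC γ hγc (f + g) = PhiC γ hγc f + PhiC γ hγc g) ∧
    (∀ (c : ℂ) (f : C(X, K)), PhiC γ hγc (c • f) = c • PhiC γ hγc f) ∧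
    PhiC γ hγc (1 : C(X, K)) = 1 ∧
    (∀ f : C(X, K), PhiC γ hγc (star f) = star (PhiC γ hγc f)) ∧
    (∀ f : C(X, K), PhiC γ hγc (PhiC γ hγc f) = f) ∧
    -- ... and a fundamental symmetry
    (∀ f : C(X, K), ‖PhiC γ hγc (star f) * f‖ = ‖f‖ ^ 2) :=
  ⟨ContinuousMap.norm_eq_iSup_norm, norm_mul_le, inferInstance, fun _ _ => rfl,
    PhiC_mul hγc hmul, PhiC_add hγc hadd, PhiC_smul hγc hsmul,
    PhiC_one hγc (map_one_of_map_mul_of_involutive hmul hinvol), PhiC_star hγc hstar,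
    PhiC_PhiC hγc hinvol, norm_PhiC_star_mul_self hγc hfs⟩

/-- For a compact Hausdorff space `X` and a unital Kreĭn C*-algebra `(K, γ)`,
the algebra `C(X, K)` with pointwise operations, pointwise involution and the sup-norm is a
unital Banach *-algebra, and `φ_C : f ↦ γ ∘ f` is a fundamental symmetry for it; hence
`C(X, K)` is a unital Kreĭn C*-algebra. -/
theorem continuous_maps_into_krein_algebra
    {X : Type*} [TopologicalSpace X] [CompactSpace X] [T2Space X]
    {K : Type*} [NormedRing K] [NormedAlgebra ℂ K]
    [StarRing K] [StarModule ℂ K] [CompleteSpace K] [ContinuousStar K]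
    (γ : K → K)
    (hadd : ∀ x y : K, γ (x + y) = γ x + γ y)
    (hsmul : ∀ (c : ℂ) (x : K), γ (c • x) = c • γ x)
    (hmul : ∀ x y : K, γ (x * y) = γ x * γ y)
    (hstar : ∀ x : K, γ (star x) = star (γ x))
    (hinvol : ∀ x : K, γ (γ x) = x)
    (hfs : ∀ x : K, ‖γ (star x) * x‖ = ‖x‖ ^ 2)
    (hγc : Continuous γ) :
    -- C(X, K) is a unital Banach algebra for the sup-norm, with pointwise operations
    (∀ f : C(X, K), ‖f‖ = ⨆ x : X, ‖f x‖) ∧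
    (∀ f g : C(X, K), ‖f * g‖ ≤ ‖f‖ * ‖g‖) ∧
    CompleteSpace C(X, K) ∧
    -- the involution is pointwise
    (∀ (f : C(X, K)) (x : X), (star f) x = star (f x)) ∧
    -- φ_C is a unital *-automorphism with φ_C ∘ φ_C = id ...
    (∀ f g : C(X, K), PhiC γ hγc (f * g) = PhiC γ hγc f * PhiC γ hγc g) ∧
    (∀ f g : C(X, K), PhiC γ hγc (f + g) = PhiC γ hγc f + PhiC γ hγc g) ∧
    (∀ (c : ℂ) (f : C(X, K)), PhiC γ hγc (c • f) = c • PhiC γ hγc f) ∧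
    PhiC γ hγc (1 : C(X, K)) = 1 ∧
    (∀ f : C(X, K), PhiC γ hγc (star f) = star (PhiC γ hγc f)) ∧
    (∀ f : C(X, K), PhiC γ hγc (PhiC γ hγc f) = f) ∧
    -- ... and a fundamental symmetry
    (∀ f : C(X, K), ‖PhiC γ hγc (star f) * f‖ = ‖f‖ ^ 2) :=
  continuous_maps_into_krein_algebra_general γ hadd hsmul hmul hstar hinvol hfs hγc
end
end

section
/- Let (A, α) be a Kreĭn C*-algebra with fundamental symmetry α, and let I ⊆ A be a norm-closed two-sided ideal that is invariant under the involution (I* ⊆ I) and under α (α(I) ⊆ I). Then the quotient algebra A/I, equipped with the quotient norm ‖x + I‖ := inf{‖x + i‖ : i ∈ I}, the induced involution (x + I)* := x* + I, and the induced map [α](x + I) := α(x) + I, is a Kreĭn C*-algebra with fundamental symmetry [α]: A/I is a Banach algebra, the induced involution is a well-defined conjugate-linear antimultiplicative involution, [α] is a well-defined *-automorphism with [α] ∘ [α] = id, and ‖[α](ξ*)·ξ‖ = ‖ξ‖² for all ξ ∈ A/I. -/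
/-!
Twisting the involution by `α`, `x† := α (x⋆)`, turns a Kreĭn C⋆-algebra `(A, α)` into a genuine
C⋆-algebra in which `I` is a closed two-sided `†`-ideal, and the Kreĭn identity
`‖[α](ξ⋆) ξ‖ = ‖ξ‖²` in `A ⧸ I` becomes the C⋆-identity of the quotient. That identity holds in
the quotient by any two-sided `⋆`-ideal: `‖ξ⋆ξ‖ ≤ ‖ξ⋆‖ ‖ξ‖ = ‖ξ‖²`, and conversely, for `i ∈ I`
and `ε > 0`, the element `e = 1 - h (h + ε²)⁻¹` with `h = i⋆i` (in the unitization) satisfies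
`x e ≡ x mod I` and `‖i e‖ ≤ ε`, whence `‖x + I‖² ≤ ‖x e‖² ≤ ‖x⋆x + i‖ + ε`.
The remaining axioms are checked on representatives.
-/

noncomputable section

variable {A : Type*} [NonUnitalNormedRing A] [NormedSpace ℂ A] [IsScalarTower ℂ A A]
  [SMulCommClass ℂ A A] [StarRing A] [StarModule ℂ A] [CompleteSpace A]

/-- Left multiplication by `a : A` descends to the quotient `A ⧸ I` when `I` is a left ideal. -/
def qMulPre (I : Submodule ℂ A) (hl : ∀ (a x : A), x ∈ I → a * x ∈ I) (a : A) :
    (A ⧸ I) →ₗ[ℂ] (A ⧸ I) :=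
  I.mapQ I (LinearMap.mulLeft ℂ a) (fun x hx => hl a x hx)

/-- The map `a ↦ (· ↦ mk a * ·)` bundled as a linear map. -/
def qMulLin (I : Submodule ℂ A) (hl : ∀ (a x : A), x ∈ I → a * x ∈ I)
    (η : A ⧸ I) : A →ₗ[ℂ] (A ⧸ I) where
  toFun a := qMulPre I hl a η
  map_add' a b := by
    obtain ⟨y, rfl⟩ := Submodule.Quotient.mk_surjective I η
    change Submodule.Quotient.mk ((a + b) * y)
      = Submodule.Quotient.mk (a * y) + Submodule.Quotient.mk (b * y)
    rw [add_mul, Submodule.Quotient.mk_add]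
  map_smul' c a := by
    obtain ⟨y, rfl⟩ := Submodule.Quotient.mk_surjective I η
    change Submodule.Quotient.mk ((c • a) * y) = c • Submodule.Quotient.mk (a * y)
    rw [smul_mul_assoc, Submodule.Quotient.mk_smul]

/-- The induced multiplication on the quotient of `A` by a two-sided ideal `I`. -/
def qMul (I : Submodule ℂ A) (hl : ∀ (a x : A), x ∈ I → a * x ∈ I)
    (hr : ∀ (x a : A), x ∈ I → x * a ∈ I) : (A ⧸ I) → (A ⧸ I) → (A ⧸ I) := fun ξ η =>
  I.liftQ (qMulLin I hl η)
    (by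
      intro a ha
      obtain ⟨y, rfl⟩ := Submodule.Quotient.mk_surjective I η
      show qMulPre I hl a (Submodule.Quotient.mk y) = 0
      change Submodule.Quotient.mk (a * y) = 0
      simpa [Submodule.Quotient.mk_eq_zero] using hr a y ha)
    ξ

/-- The induced involution `(x + I)* = x* + I` on the quotient, as a conjugate-linear map. -/
def qStar (I : Submodule ℂ A) (hst : ∀ x : A, x ∈ I → star x ∈ I) :
    (A ⧸ I) →ₛₗ[starRingEnd ℂ] (A ⧸ I) :=
  I.mapQ I ⟨⟨(star : A → A), star_add⟩, fun c x => star_smul c x⟩ (fun x hx => hst x hx)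

/-- The induced map `[α] (x + I) = α x + I` on the quotient. -/
def qAlpha (I : Submodule ℂ A) (α : A → A)
    (hadd : ∀ x y : A, α (x + y) = α x + α y)
    (hsmul : ∀ (c : ℂ) (x : A), α (c • x) = c • α x)
    (hαI : ∀ x : A, x ∈ I → α x ∈ I) : (A ⧸ I) →ₗ[ℂ] (A ⧸ I) :=
  I.mapQ I ⟨⟨α, hadd⟩, fun c x => hsmul c x⟩ (fun x hx => hαI x hx)


section CStar
variable {P : Type*} [NonUnitalNormedRing P] [StarRing P] [CStarRing P] {e : P}

lemma CStarRing.sq_norm_mul_le_norm_star_mul_self_mul (he : IsSelfAdjoint e) (he1 : ‖e‖ ≤ 1)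
    (y : P) : ‖y * e‖ ^ 2 ≤ ‖star y * y * e‖ :=
  calc ‖y * e‖ ^ 2 = ‖e * (star y * y * e)‖ := by
        rw [sq, ← CStarRing.norm_star_mul_self, star_mul, he.star_eq]; simp only [mul_assoc]
    _ ≤ ‖star y * y * e‖ := norm_mul_le_of_le he1 le_rfl |>.trans_eq (one_mul _)

lemma CStarRing.sq_norm_mul_le_norm_star_mul_self_add (he : IsSelfAdjoint e) (he1 : ‖e‖ ≤ 1)
    (x i : P) : ‖x * e‖ ^ 2 ≤ ‖star x * x + i‖ + ‖i * e‖ :=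
  calc ‖x * e‖ ^ 2 = ‖e * (star x * x + i) * e - e * (i * e)‖ := by
        rw [sq, ← CStarRing.norm_star_mul_self, star_mul, he.star_eq]; noncomm_ring
    _ ≤ 1 * ‖star x * x + i‖ * 1 + 1 * ‖i * e‖ :=
        (norm_sub_le _ _).trans (add_le_add (norm_mul₃_le.trans (by gcongr))
          (norm_mul_le_of_le he1 le_rfl))
    _ = ‖star x * x + i‖ + ‖i * e‖ := by ring

end CStar

lemma CStarAlgebra.exists_approxUnit_of_star_mul_self {P : Type*} [CStarAlgebra P] (y : P) {c : ℝ} (hc : 0 < c) :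
    ∃ v : P, IsSelfAdjoint (1 - star y * y * v) ∧ ‖1 - star y * y * v‖ ≤ 1 ∧
      ‖star y * y * (1 - star y * y * v)‖ ≤ c := by
  set h := star y * y
  have hh : IsSelfAdjoint h := .star_mul_self y
  have hspec : ∀ t ∈ spectrum ℝ h, 0 ≤ t := fun t ht ↦ spectrum_star_mul_self_nonneg t ht
  have hinv : ContinuousOn (fun t : ℝ ↦ (t + c)⁻¹) (spectrum ℝ h) :=
    ContinuousOn.inv₀ (f := fun t ↦ t + c) (by fun_prop) fun t ht ↦ by linarith [hspec t ht]
  have hmul : ∀ f : ℝ → ℝ, ContinuousOn f (spectrum ℝ h) →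
      h * cfc f h = cfc (fun t ↦ t * f t) h := fun f hf ↦ by
    rw [cfc_mul _ _ h (continuousOn_id' _) hf, cfc_id' ℝ h]
  have he : 1 - h * cfc (fun t : ℝ ↦ (t + c)⁻¹) h = cfc (fun t : ℝ ↦ c * (t + c)⁻¹) h := by
    rw [hmul _ hinv, ← cfc_const_one ℝ h, ← cfc_sub (fun _ ↦ 1) (fun t ↦ t * (t + c)⁻¹) h
      continuousOn_const ((continuousOn_id' _).mul hinv)]
    refine cfc_congr fun t ht ↦ ?_
    have := hspec t ht
    field_simp
    ring
  refine ⟨cfc (fun t : ℝ ↦ (t + c)⁻¹) h, he ▸ cfc_predicate _ h, ?_, ?_⟩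
  · rw [he]
    refine norm_cfc_le zero_le_one fun t ht ↦ ?_
    have := hspec t ht
    rw [Real.norm_eq_abs, abs_of_pos (by positivity), ← div_eq_mul_inv, div_le_one (by positivity)]
    linarith
  · rw [he, hmul (fun t ↦ c * (t + c)⁻¹) (continuousOn_const.mul hinv)]
    refine norm_cfc_le hc.le fun t ht ↦ ?_
    have := hspec t ht
    rw [Real.norm_eq_abs, abs_of_nonneg (by positivity), mul_left_comm, ← div_eq_mul_inv]
    exact mul_le_of_le_one_right hc.le ((div_le_one (by positivity)).2 (by linarith))

namespace Submodule.Quotient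

section Mul
variable {R M : Type*} [Ring R] [NonUnitalSeminormedRing M] [Module R M] (I : Submodule R M)

lemma norm_mk_mul_le (hl : ∀ (a x : M), x ∈ I → a * x ∈ I) (hr : ∀ (x a : M), x ∈ I → x * a ∈ I)
    (x y : M) : ‖(mk (x * y) : M ⧸ I)‖ ≤ ‖(mk x : M ⧸ I)‖ * ‖(mk y : M ⧸ I)‖ := by
  refine le_mul_of_forall_lt₀ fun a ha b hb ↦ ?_
  obtain ⟨m, hm, hma⟩ := QuotientAddGroup.norm_lt_iff.1 ha
  obtain ⟨n, hn, hnb⟩ := QuotientAddGroup.norm_lt_iff.1 hb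
  have hmx : m - x ∈ I := (Submodule.Quotient.eq I).1 hm
  have hny : n - y ∈ I := (Submodule.Quotient.eq I).1 hn
  have hmn : (mk (x * y) : M ⧸ I) = mk (m * n) := by
    rw [Submodule.Quotient.eq]
    have : x * y - m * n = -(m * (n - y) + (m - x) * y) := by noncomm_ring
    exact this ▸ I.neg_mem (I.add_mem (hl _ _ hny) (hr _ _ hmx))
  calc ‖(mk (x * y) : M ⧸ I)‖ ≤ ‖m * n‖ := hmn ▸ norm_mk_le I _
    _ ≤ a * b := norm_mul_le_of_le hma.le hnb.le

end Mul

section Star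
variable {R M : Type*} [Ring R] [SeminormedAddCommGroup M] [StarAddMonoid M] [NormedStarGroup M]
  [Module R M] (I : Submodule R M)

lemma norm_mk_star_le (hst : ∀ x : M, x ∈ I → star x ∈ I) (x : M) :
    ‖(mk (star x) : M ⧸ I)‖ ≤ ‖(mk x : M ⧸ I)‖ := by
  refine QuotientAddGroup.le_norm_iff.2 fun m hm ↦ ?_
  have hstar : (mk (star x) : M ⧸ I) = mk (star m) := by
    rw [Submodule.Quotient.eq, ← star_sub]
    exact hst _ ((Submodule.Quotient.eq I).1 hm.symm)
  calc ‖(mk (star x) : M ⧸ I)‖ ≤ ‖star m‖ := hstar ▸ norm_mk_le I _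
    _ = ‖m‖ := norm_star m

lemma norm_mk_star (hst : ∀ x : M, x ∈ I → star x ∈ I) (x : M) :
    ‖(mk (star x) : M ⧸ I)‖ = ‖(mk x : M ⧸ I)‖ :=
  le_antisymm (norm_mk_star_le I hst x) (by simpa using norm_mk_star_le I hst (star x))

end Star

section CStarAlgebra
variable {B : Type*} [NonUnitalCStarAlgebra B] (I : Submodule ℂ B)

lemma sq_norm_mk_le_norm_star_mul_self_add (hl : ∀ (a x : B), x ∈ I → a * x ∈ I)
    (hr : ∀ (x a : B), x ∈ I → x * a ∈ I) (x : B) {i : B} (hi : i ∈ I) :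
    ‖(mk x : B ⧸ I)‖ ^ 2 ≤ ‖star x * x + i‖ := by
  refine le_of_forall_pos_le_add fun ε hε ↦ ?_
  obtain ⟨v, he, he1, hie⟩ := CStarAlgebra.exists_approxUnit_of_star_mul_self (i : Unitization ℂ B) (pow_pos hε 2)
  set e := 1 - star (i : Unitization ℂ B) * i * v
  set u := v.fst • (star i * i) + star i * i * v.snd
  have hu : u ∈ I := I.add_mem (I.smul_mem _ (hl _ _ hi)) (hr _ _ (hl _ _ hi))
  have hu' : ((u : B) : Unitization ℂ B) = star (i : Unitization ℂ B) * i * v := by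
    rw [← Unitization.inr_star, ← Unitization.inr_mul]
    ext <;> simp [u, Unitization.snd_mul]
  have hmk : (mk x : B ⧸ I) = mk (x - x * u) := by
    rw [Submodule.Quotient.eq, sub_sub_cancel]
    exact hl _ _ hu
  have hx : ‖(mk x : B ⧸ I)‖ ≤ ‖(x : Unitization ℂ B) * e‖ := by
    rw [hmk, mul_sub, mul_one, ← hu', ← Unitization.inr_mul, ← Unitization.inr_sub,
      Unitization.norm_inr]
    exact norm_mk_le I _
  have hie' : ‖(i : Unitization ℂ B) * e‖ ≤ ε :=
    (pow_le_pow_iff_left₀ (norm_nonneg _) hε.le two_ne_zero).1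
      ((CStarRing.sq_norm_mul_le_norm_star_mul_self_mul he he1 _).trans hie)
  calc ‖(mk x : B ⧸ I)‖ ^ 2 ≤ ‖(x : Unitization ℂ B) * e‖ ^ 2 := by gcongr
    _ ≤ ‖star (x : Unitization ℂ B) * x + i‖ + ‖(i : Unitization ℂ B) * e‖ :=
      CStarRing.sq_norm_mul_le_norm_star_mul_self_add he he1 _ _
    _ ≤ ‖star x * x + i‖ + ε := by
      rw [← Unitization.inr_star, ← Unitization.inr_mul, ← Unitization.inr_add,
        Unitization.norm_inr]
      gcongr

lemma norm_mk_star_mul_self (hl : ∀ (a x : B), x ∈ I → a * x ∈ I)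
    (hr : ∀ (x a : B), x ∈ I → x * a ∈ I) (hst : ∀ x : B, x ∈ I → star x ∈ I) (x : B) :
    ‖(mk (star x * x) : B ⧸ I)‖ = ‖(mk x : B ⧸ I)‖ ^ 2 := by
  refine le_antisymm ?_ (QuotientAddGroup.le_norm_iff.2 fun m hm ↦ ?_)
  · calc ‖(mk (star x * x) : B ⧸ I)‖ ≤ ‖(mk (star x) : B ⧸ I)‖ * ‖(mk x : B ⧸ I)‖ :=
          norm_mk_mul_le I hl hr _ _
      _ = ‖(mk x : B ⧸ I)‖ ^ 2 := by rw [norm_mk_star I hst, sq]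
  · simpa using sq_norm_mk_le_norm_star_mul_self_add I hl hr x
      ((Submodule.Quotient.eq I).1 hm)

end CStarAlgebra

end Submodule.Quotient

class IsFundamentalSymmetry {A : Type*} [NonUnitalNormedRing A] [NormedSpace ℂ A] [StarRing A]
    (α : A → A) : Prop where
  map_add : ∀ x y : A, α (x + y) = α x + α y
  map_smul : ∀ (c : ℂ) (x : A), α (c • x) = c • α x
  map_mul : ∀ x y : A, α (x * y) = α x * α y
  map_star : ∀ x : A, α (star x) = star (α x)
  involutive : ∀ x : A, α (α x) = x
  norm_map_star_mul_self : ∀ x : A, ‖α (star x) * x‖ = ‖x‖ ^ 2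

/-- `A` equipped with the involution `x ↦ α (star x)`. -/
def TwistedStar (A : Type*) (_α : A → A) : Type _ := A

def TwistedStar.ofTwisted {A : Type*} {α : A → A} : TwistedStar A α → A := id

namespace TwistedStar

variable {α : A → A}

instance : NonUnitalNormedRing (TwistedStar A α) := inferInstanceAs (NonUnitalNormedRing A)
instance : NormedSpace ℂ (TwistedStar A α) := inferInstanceAs (NormedSpace ℂ A)
instance : IsScalarTower ℂ (TwistedStar A α) (TwistedStar A α) :=
  inferInstanceAs (IsScalarTower ℂ A A)
instance : SMulCommClass ℂ (TwistedStar A α) (TwistedStar A α) :=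
  inferInstanceAs (SMulCommClass ℂ A A)
instance : CompleteSpace (TwistedStar A α) := inferInstanceAs (CompleteSpace A)

variable [hα : IsFundamentalSymmetry α]

instance : StarRing (TwistedStar A α) where
  star x := α (star (ofTwisted x))
  star_involutive x := by
    change α (star (α (star (ofTwisted x)))) = x
    rw [← hα.map_star, hα.involutive, star_star]
    rfl
  star_mul x y := by
    change α (star (ofTwisted x * ofTwisted y)) = α (star (ofTwisted y)) * α (star (ofTwisted x))
    rw [star_mul, hα.map_mul]
  star_add x y := by
    change α (star (ofTwisted x + ofTwisted y)) = α (star (ofTwisted x)) + α (star (ofTwisted y))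
    rw [star_add, hα.map_add]

instance : StarModule ℂ (TwistedStar A α) where
  star_smul c x := by
    change α (star (c • ofTwisted x)) = star c • α (star (ofTwisted x))
    rw [star_smul, hα.map_smul]

instance : CStarRing (TwistedStar A α) where
  norm_mul_self_le x := by
    change ‖ofTwisted x‖ * ‖ofTwisted x‖ ≤ ‖α (star (ofTwisted x)) * ofTwisted x‖
    rw [hα.norm_map_star_mul_self, sq]

instance : NonUnitalCStarAlgebra (TwistedStar A α) where

end TwistedStar

/-- Let `(A, α)` be a Kreĭn C*-algebra and `I ⊆ A` a norm-closed two-sided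
ideal, invariant under the involution and under `α`.  Then `A ⧸ I`, with the quotient norm,
the induced involution, and the induced map `[α]`, is again a Kreĭn C*-algebra with
fundamental symmetry `[α]`. -/
theorem krein_quotient_is_krein
    (α : A → A)
    (hadd : ∀ x y : A, α (x + y) = α x + α y)
    (hsmul : ∀ (c : ℂ) (x : A), α (c • x) = c • α x)
    (hmul : ∀ x y : A, α (x * y) = α x * α y)
    (hstar : ∀ x : A, α (star x) = star (α x))
    (hinvol : ∀ x : A, α (α x) = x)
    (hfs : ∀ x : A, ‖α (star x) * x‖ = ‖x‖ ^ 2)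
    (I : Submodule ℂ A) (hclosed : IsClosed (I : Set A))
    (hl : ∀ (a x : A), x ∈ I → a * x ∈ I)
    (hr : ∀ (x a : A), x ∈ I → x * a ∈ I)
    (hstI : ∀ x : A, x ∈ I → star x ∈ I)
    (hαI : ∀ x : A, x ∈ I → α x ∈ I) :
    -- the quotient norm is `‖x + I‖ = inf {‖x + i‖ | i ∈ I}`
    (∀ x : A, ‖(Submodule.Quotient.mk x : A ⧸ I)‖ = sInf {r : ℝ | ∃ i ∈ I, r = ‖x + i‖}) ∧
    -- the operations are the induced ones on cosets
    (∀ x y : A, qMul I hl hr (Submodule.Quotient.mk x) (Submodule.Quotient.mk y)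
      = Submodule.Quotient.mk (x * y)) ∧
    (∀ x : A, qStar I hstI (Submodule.Quotient.mk x) = Submodule.Quotient.mk (star x)) ∧
    (∀ x : A, qAlpha I α hadd hsmul hαI (Submodule.Quotient.mk x)
      = Submodule.Quotient.mk (α x)) ∧
    -- `A ⧸ I` is a Banach algebra
    CompleteSpace (A ⧸ I) ∧
    (∀ ξ : A ⧸ I, ‖ξ‖ = 0 → ξ = 0) ∧
    (∀ ξ η : A ⧸ I, ‖qMul I hl hr ξ η‖ ≤ ‖ξ‖ * ‖η‖) ∧
    (∀ ξ η ζ : A ⧸ I, qMul I hl hr (qMul I hl hr ξ η) ζ = qMul I hl hr ξ (qMul I hl hr η ζ)) ∧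
    (∀ ξ η ζ : A ⧸ I, qMul I hl hr ξ (η + ζ) = qMul I hl hr ξ η + qMul I hl hr ξ ζ) ∧
    (∀ ξ η ζ : A ⧸ I, qMul I hl hr (η + ζ) ξ = qMul I hl hr η ξ + qMul I hl hr ζ ξ) ∧
    (∀ (c : ℂ) (ξ η : A ⧸ I), qMul I hl hr (c • ξ) η = c • qMul I hl hr ξ η) ∧
    (∀ (c : ℂ) (ξ η : A ⧸ I), qMul I hl hr ξ (c • η) = c • qMul I hl hr ξ η) ∧
    -- the induced involution is an involution
    (∀ ξ : A ⧸ I, qStar I hstI (qStar I hstI ξ) = ξ) ∧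
    (∀ ξ η : A ⧸ I, qStar I hstI (qMul I hl hr ξ η)
      = qMul I hl hr (qStar I hstI η) (qStar I hstI ξ)) ∧
    -- `[α]` is a *-automorphism with `[α] ∘ [α] = id` ...
    (∀ ξ η : A ⧸ I, qAlpha I α hadd hsmul hαI (qMul I hl hr ξ η)
      = qMul I hl hr (qAlpha I α hadd hsmul hαI ξ) (qAlpha I α hadd hsmul hαI η)) ∧
    (∀ ξ : A ⧸ I, qAlpha I α hadd hsmul hαI (qStar I hstI ξ)
      = qStar I hstI (qAlpha I α hadd hsmul hαI ξ)) ∧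
    (∀ ξ : A ⧸ I, qAlpha I α hadd hsmul hαI (qAlpha I α hadd hsmul hαI ξ) = ξ) ∧
    -- ... and a fundamental symmetry
    (∀ ξ : A ⧸ I, ‖qMul I hl hr (qAlpha I α hadd hsmul hαI (qStar I hstI ξ)) ξ‖
      = ‖ξ‖ ^ 2) := by
  have := hclosed
  have : IsFundamentalSymmetry α := ⟨hadd, hsmul, hmul, hstar, hinvol, hfs⟩
  refine ⟨fun x ↦ ?_, fun _ _ ↦ rfl, fun _ ↦ rfl, fun _ ↦ rfl, inferInstance,
    fun _ ↦ norm_eq_zero.1, ?_, ?_, ?_, ?_, ?_, ?_, ?_, ?_, ?_, ?_, ?_, ?_⟩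
  · have hset : {r : ℝ | ∃ i ∈ I, r = ‖x + i‖} = (‖x + ·‖) '' (I : Set A) := by
      ext; simp [eq_comm]
    exact hset ▸ quotient_norm_mk_eq I.toAddSubgroup x
  · rintro ⟨x⟩ ⟨y⟩; exact Submodule.Quotient.norm_mk_mul_le I hl hr x y
  · rintro ⟨x⟩ ⟨y⟩ ⟨z⟩; exact congrArg Submodule.Quotient.mk (mul_assoc x y z)
  · rintro ⟨x⟩ ⟨y⟩ ⟨z⟩; exact congrArg Submodule.Quotient.mk (mul_add x y z)
  · rintro ⟨x⟩ ⟨y⟩ ⟨z⟩; exact congrArg Submodule.Quotient.mk (add_mul y z x)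
  · rintro c ⟨x⟩ ⟨y⟩; exact congrArg Submodule.Quotient.mk (smul_mul_assoc c x y)
  · rintro c ⟨x⟩ ⟨y⟩; exact congrArg Submodule.Quotient.mk (mul_smul_comm c x y)
  · rintro ⟨x⟩; exact congrArg Submodule.Quotient.mk (star_star x)
  · rintro ⟨x⟩ ⟨y⟩; exact congrArg Submodule.Quotient.mk (star_mul x y)
  · rintro ⟨x⟩ ⟨y⟩; exact congrArg Submodule.Quotient.mk (hmul x y)
  · rintro ⟨x⟩; exact congrArg Submodule.Quotient.mk (hstar x)
  · rintro ⟨x⟩; exact congrArg Submodule.Quotient.mk (hinvol x)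
  · rintro ⟨x⟩
    exact Submodule.Quotient.norm_mk_star_mul_self (B := TwistedStar A α) I hl hr
      (fun y hy ↦ hαI _ (hstI _ hy)) x
end
end

section
/- Let (A, α) and (B, β) be Kreĭn C*-algebras with fundamental symmetries α and β, and let φ : A → B be a ℂ-linear multiplicative map with φ(x*) = φ(x)* for all x ∈ A and φ ∘ α = β ∘ φ. Then φ is norm-continuous (indeed norm-decreasing: ‖φ(x)‖ ≤ ‖x‖ for all x ∈ A), and φ preserves the grading: φ(A₊) ⊆ B₊ and φ(A₋) ⊆ B₋. -/
/-!
Twisting the involution by the fundamental symmetry, `x ↦ α (star x)`, turns a Kreĭn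
C*-algebra into a genuine C*-algebra: the identity `‖α (star x) * x‖ = ‖x‖²` is exactly the
C*-identity for the twisted involution. A map intertwining the symmetries and the involutions
is then a *-homomorphism of these C*-algebras, hence contractive; the grading is preserved
because `φ ∘ α = β ∘ φ`.
-/

namespace Krein

variable {A : Type*}

abbrev twistedStarRing [NonUnitalNonAssocSemiring A] [StarRing A] (α : A → A)
    (hadd : ∀ x y : A, α (x + y) = α x + α y)
    (hmul : ∀ x y : A, α (x * y) = α x * α y)
    (hstar : ∀ x : A, α (star x) = star (α x))
    (hinvol : ∀ x : A, α (α x) = x) : StarRing A where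
  star x := α (star x)
  star_involutive x := by
    show α (star (α (star x))) = x
    rw [← hstar, hinvol, star_star]
  star_mul x y := by
    show α (star (x * y)) = α (star y) * α (star x)
    rw [star_mul, hmul]
  star_add x y := by
    show α (star (x + y)) = α (star x) + α (star y)
    rw [star_add, hadd]

abbrev twistedCStarAlgebra [NonUnitalNormedRing A] [NormedSpace ℂ A]
    [IsScalarTower ℂ A A] [SMulCommClass ℂ A A] [StarRing A] [StarModule ℂ A] [CompleteSpace A]
    (α : A → A)
    (hadd : ∀ x y : A, α (x + y) = α x + α y)
    (hsmul : ∀ (c : ℂ) (x : A), α (c • x) = c • α x)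
    (hmul : ∀ x y : A, α (x * y) = α x * α y)
    (hstar : ∀ x : A, α (star x) = star (α x))
    (hinvol : ∀ x : A, α (α x) = x)
    (hfs : ∀ x : A, ‖α (star x) * x‖ = ‖x‖ ^ 2) : NonUnitalCStarAlgebra A :=
  { toNonUnitalNormedRing := ‹_›
    toStarRing := twistedStarRing α hadd hmul hstar hinvol
    toCompleteSpace := ‹_›
    toNormedSpace := ‹_›
    toIsScalarTower := ‹_›
    toSMulCommClass := ‹_›
    toCStarRing := @CStarRing.mk A _ (twistedStarRing α hadd hmul hstar hinvol) fun x => by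
      show ‖x‖ * ‖x‖ ≤ ‖α (star x) * x‖
      rw [hfs, sq]
    toStarModule := @StarModule.mk ℂ A _
      (twistedStarRing α hadd hmul hstar hinvol).toStarMul.toInvolutiveStar.toStar _
      fun c x => by
        show α (star (c • x)) = star c • α (star x)
        rw [star_smul, hsmul] }

end Krein

theorem norm_apply_le_of_map_star {A B : Type*} [NonUnitalCStarAlgebra A]
    [NonUnitalCStarAlgebra B] (φ : A → B)
    (hadd : ∀ x y : A, φ (x + y) = φ x + φ y)
    (hsmul : ∀ (c : ℂ) (x : A), φ (c • x) = c • φ x)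
    (hmul : ∀ x y : A, φ (x * y) = φ x * φ y)
    (hstar : ∀ x : A, φ (star x) = star (φ x)) (x : A) : ‖φ x‖ ≤ ‖x‖ :=
  NonUnitalStarAlgHom.norm_apply_le
    ({ toFun := φ
       map_smul' := hsmul
       map_zero' := by simpa using hsmul 0 0
       map_add' := hadd
       map_mul' := hmul
       map_star' := hstar } : A →⋆ₙₐ[ℂ] B) x

/-- A *-homomorphism `φ : A → B` between Kreĭn C*-algebras intertwining the
fundamental symmetries is norm-decreasing (hence continuous) and preserves the grading. -/
theorem krein_hom_is_contractive_and_graded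
    {A : Type*} [NonUnitalNormedRing A] [NormedSpace ℂ A]
    [IsScalarTower ℂ A A] [SMulCommClass ℂ A A] [StarRing A] [StarModule ℂ A] [CompleteSpace A]
    {B : Type*} [NonUnitalNormedRing B] [NormedSpace ℂ B]
    [IsScalarTower ℂ B B] [SMulCommClass ℂ B B] [StarRing B] [StarModule ℂ B] [CompleteSpace B]
    (α : A → A)
    (hadd : ∀ x y : A, α (x + y) = α x + α y)
    (hsmul : ∀ (c : ℂ) (x : A), α (c • x) = c • α x)
    (hmul : ∀ x y : A, α (x * y) = α x * α y)
    (hstar : ∀ x : A, α (star x) = star (α x))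
    (hinvol : ∀ x : A, α (α x) = x)
    (hfs : ∀ x : A, ‖α (star x) * x‖ = ‖x‖ ^ 2)
    (β : B → B)
    (hadd' : ∀ x y : B, β (x + y) = β x + β y)
    (hsmul' : ∀ (c : ℂ) (x : B), β (c • x) = c • β x)
    (hmul' : ∀ x y : B, β (x * y) = β x * β y)
    (hstar' : ∀ x : B, β (star x) = star (β x))
    (hinvol' : ∀ x : B, β (β x) = x)
    (hfs' : ∀ x : B, ‖β (star x) * x‖ = ‖x‖ ^ 2)
    (φ : A → B)
    (hφadd : ∀ x y : A, φ (x + y) = φ x + φ y)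
    (hφsmul : ∀ (c : ℂ) (x : A), φ (c • x) = c • φ x)
    (hφmul : ∀ x y : A, φ (x * y) = φ x * φ y)
    (hφstar : ∀ x : A, φ (star x) = star (φ x))
    (hφα : ∀ x : A, φ (α x) = β (φ x)) :
    (∀ x : A, ‖φ x‖ ≤ ‖x‖) ∧
    Continuous φ ∧
    (∀ x : A, α x = x → β (φ x) = φ x) ∧
    (∀ x : A, α x = -x → β (φ x) = -φ x) := by
  have hle : ∀ x : A, ‖φ x‖ ≤ ‖x‖ :=
    @norm_apply_le_of_map_star A B (Krein.twistedCStarAlgebra α hadd hsmul hmul hstar hinvol hfs)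
      (Krein.twistedCStarAlgebra β hadd' hsmul' hmul' hstar' hinvol' hfs') φ hφadd hφsmul hφmul
      (fun x => show φ (α (star x)) = β (star (φ x)) by rw [hφα, hφstar])
  let φAdd : A →+ B := AddMonoidHom.mk' φ hφadd
  refine ⟨hle, AddMonoidHomClass.continuous_of_bound φAdd 1 fun x => by rw [one_mul]; exact hle x,
    ?_, ?_⟩
  · intro x hx
    rw [← hφα, hx]
  · intro x hx
    rw [← hφα, hx]
    exact map_neg φAdd x
end

section
/- Let (A, α) be a unital Kreĭn C*-algebra with fundamental symmetry α. Then the character space Ω(A, α), viewed as a subset of the space of all functions A → 𝕂 with the product (pointwise-convergence) topology, is a compact Hausdorff topological space. -/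
noncomputable section

/-- A character on a Kreĭn C*-algebra `(A, α)`: a unital ℂ-linear multiplicative map
`w : A → 𝕂` with `w (star x) = (w x)*` and `w ∘ α = γ ∘ w`. -/
def IsKChar {A : Type*} [NormedRing A] [NormedAlgebra ℂ A] [StarRing A]
    (α : A → A) (w : A → Matrix (Fin 2) (Fin 2) ℂ) : Prop :=
  (∀ x, Kmem (w x)) ∧
  (∀ x y, w (x + y) = w x + w y) ∧
  (∀ (c : ℂ) (x : A), w (c • x) = c • w x) ∧
  (∀ x y, w (x * y) = w x * w y) ∧
  w 1 = 1 ∧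
  (∀ x, w (star x) = Kst (w x)) ∧
  (∀ x, w (α x) = Kgamma (w x))


/-!
For a character `w` with `w x = T_{a,b}`, the maps `x ↦ a + b` and `x ↦ a - b` are characters of
the Banach algebra `A` (the eigenvalues of `T_{a,b}` on `(1, 1)` and `(1, -1)`), so their values
lie in the spectrum and are bounded by `‖x‖ ‖1‖`. Hence `Ω(A, α)` lies in a product of closed
balls, which is compact by Tychonoff, and it is closed there because it is cut out by pointwise
identities between continuous functions of `w`.
-/

open Metric

lemma continuous_Kst : Continuous Kst :=
  continuous_pi fun i => continuous_pi fun j => by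
    by_cases h : i = j
    · simp only [Kst, Matrix.of_apply, h, if_true]; fun_prop
    · simp only [Kst, Matrix.of_apply, h, if_false]; fun_prop

lemma continuous_Kgamma : Continuous Kgamma :=
  continuous_pi fun i => continuous_pi fun j => by
    by_cases h : i = j
    · simp only [Kgamma, Matrix.of_apply, h, if_true]; fun_prop
    · simp only [Kgamma, Matrix.of_apply, h, if_false]; fun_prop

namespace IsKChar

variable {A : Type*} [NormedRing A] [NormedAlgebra ℂ A] [StarRing A] {α : A → A}
  {w : A → Matrix (Fin 2) (Fin 2) ℂ}

lemma map_add (hw : IsKChar α w) (x y : A) : w (x + y) = w x + w y := hw.2.1 x y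

lemma map_smul (hw : IsKChar α w) (c : ℂ) (x : A) : w (c • x) = c • w x := hw.2.2.1 c x

lemma map_mul (hw : IsKChar α w) (x y : A) : w (x * y) = w x * w y := hw.2.2.2.1 x y

lemma map_one (hw : IsKChar α w) : w 1 = 1 := hw.2.2.2.2.1

lemma apply_one_one (hw : IsKChar α w) (x : A) : w x 1 1 = w x 0 0 := (hw.1 x).1.symm

lemma apply_one_zero (hw : IsKChar α w) (x : A) : w x 1 0 = w x 0 1 := (hw.1 x).2.symm

lemma mul_apply_zero_zero (hw : IsKChar α w) (x y : A) :
    w (x * y) 0 0 = w x 0 0 * w y 0 0 + w x 0 1 * w y 0 1 := by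
  simp [hw.map_mul, Matrix.mul_apply, Fin.sum_univ_two, hw.apply_one_zero]

lemma mul_apply_zero_one (hw : IsKChar α w) (x y : A) :
    w (x * y) 0 1 = w x 0 0 * w y 0 1 + w x 0 1 * w y 0 0 := by
  simp [hw.map_mul, Matrix.mul_apply, Fin.sum_univ_two, hw.apply_one_one]

/-- The scalar character `x ↦ a + s b` of `A`, where `w x = T_{a,b}` and `s = ±1`. -/
def toAlgHom (hw : IsKChar α w) (s : ℂ) (hs : s * s = 1) : A →ₐ[ℂ] ℂ where
  toFun x := w x 0 0 + s * w x 0 1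
  map_one' := by simp [hw.map_one]
  map_mul' x y := by
    simp only [hw.mul_apply_zero_zero, hw.mul_apply_zero_one]
    linear_combination (-(w x 0 1 * w y 0 1)) * hs
  map_zero' := by simp [show w 0 = 0 by simpa using hw.map_smul 0 0]
  map_add' x y := by simp only [hw.map_add, Matrix.add_apply]; ring
  commutes' c := by
    simp [Algebra.algebraMap_eq_smul_one, hw.map_smul, hw.map_one]

lemma toAlgHom_apply (hw : IsKChar α w) (s : ℂ) (hs : s * s = 1) (x : A) :
    hw.toAlgHom s hs x = w x 0 0 + s * w x 0 1 :=
  rfl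

lemma norm_apply_le [CompleteSpace A] (hw : IsKChar α w) (x : A) (i j : Fin 2) :
    ‖w x i j‖ ≤ ‖x‖ * ‖(1 : A)‖ := by
  set φp := hw.toAlgHom 1 (one_mul 1)
  set φm := hw.toAlgHom (-1) (by norm_num)
  have half_le : ∀ t : ℂ, ‖t‖ = 1 → ‖(φp x + t * φm x) / 2‖ ≤ ‖x‖ * ‖(1 : A)‖ := fun t ht =>
    calc ‖(φp x + t * φm x) / 2‖ ≤ (‖φp x‖ + ‖φm x‖) / 2 := by
          rw [norm_div, Complex.norm_ofNat]
          gcongr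
          simpa [ht] using norm_add_le (φp x) (t * φm x)
      _ ≤ (‖x‖ * ‖(1 : A)‖ + ‖x‖ * ‖(1 : A)‖) / 2 := by
          gcongr <;> exact AlgHom.norm_apply_le_self_mul_norm_one _ x
      _ = ‖x‖ * ‖(1 : A)‖ := by ring
  have h00 : w x 0 0 = (φp x + 1 * φm x) / 2 := by
    simp only [φp, φm, toAlgHom_apply]; ring
  have h01 : w x 0 1 = (φp x + -1 * φm x) / 2 := by
    simp only [φp, φm, toAlgHom_apply]; ring
  fin_cases i <;> fin_cases j
  · simpa [h00] using half_le 1 (by simp)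
  · simpa [h01] using half_le (-1) (by simp)
  · simpa [hw.apply_one_zero, h01] using half_le (-1) (by simp)
  · simpa [hw.apply_one_one, h00] using half_le 1 (by simp)

end IsKChar

lemma isClosed_setOf_isKChar {A : Type*} [NormedRing A] [NormedAlgebra ℂ A] [StarRing A]
    (α : A → A) : IsClosed {w : A → Matrix (Fin 2) (Fin 2) ℂ | IsKChar α w} := by
  have ev : ∀ x : A, Continuous fun w : A → Matrix (Fin 2) (Fin 2) ℂ => w x := continuous_apply
  simp only [IsKChar, Kmem, Set.ofPred_and, Set.ofPred_forall]
  refine .inter (isClosed_iInter fun x => .inter ?_ ?_) (.inter ?_ (.inter ?_ (.inter ?_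
    (.inter ?_ (.inter ?_ ?_)))))
  · exact isClosed_eq ((ev x).matrix_elem 0 0) ((ev x).matrix_elem 1 1)
  · exact isClosed_eq ((ev x).matrix_elem 0 1) ((ev x).matrix_elem 1 0)
  · exact isClosed_iInter fun x => isClosed_iInter fun y => isClosed_eq (ev _) ((ev x).add (ev y))
  · exact isClosed_iInter fun c => isClosed_iInter fun x => isClosed_eq (ev _) ((ev x).const_smul c)
  · exact isClosed_iInter fun x => isClosed_iInter fun y => isClosed_eq (ev _) ((ev x).mul (ev y))
  · exact isClosed_eq (ev 1) continuous_const
  · exact isClosed_iInter fun x => isClosed_eq (ev _) (continuous_Kst.comp (ev x))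
  · exact isClosed_iInter fun x => isClosed_eq (ev _) (continuous_Kgamma.comp (ev x))

theorem krein_character_space_compact_hausdorff_general {A : Type*} [NormedRing A] [NormedAlgebra ℂ A]
    [StarRing A] [CompleteSpace A]
(α : A → A) :
    IsCompact {w : A → Matrix (Fin 2) (Fin 2) ℂ | IsKChar α w} ∧
    T2Space {w : A → Matrix (Fin 2) (Fin 2) ℂ | IsKChar α w} := by
  refine ⟨?_, inferInstance⟩
  have box : IsCompact (Set.univ.pi fun x : A => Set.univ.pi fun _ : Fin 2 =>
      Set.univ.pi fun _ : Fin 2 => closedBall (0 : ℂ) (‖x‖ * ‖(1 : A)‖)) :=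
    isCompact_univ_pi fun _ => isCompact_univ_pi fun _ => isCompact_univ_pi fun _ =>
      isCompact_closedBall _ _
  refine box.of_isClosed_subset (isClosed_setOf_isKChar α) fun w hw x _ i _ j _ => ?_
  simpa using hw.norm_apply_le x i j

/-- The character space `Ω(A, α)` of a unital Kreĭn C*-algebra, with the
topology of pointwise convergence, is a compact Hausdorff space. -/
theorem krein_character_space_compact_hausdorff {A : Type*} [NormedRing A] [NormedAlgebra ℂ A]
    [StarRing A] [StarModule ℂ A] [CompleteSpace A]
(α : A → A)
    (hadd : ∀ x y : A, α (x + y) = α x + α y)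
    (hsmul : ∀ (c : ℂ) (x : A), α (c • x) = c • α x)
    (hmul : ∀ x y : A, α (x * y) = α x * α y)
    (hstar : ∀ x : A, α (star x) = star (α x))
    (hinvol : ∀ x : A, α (α x) = x)
    (hfs : ∀ x : A, ‖α (star x) * x‖ = ‖x‖ ^ 2) :
    IsCompact {w : A → Matrix (Fin 2) (Fin 2) ℂ | IsKChar α w} ∧
    T2Space {w : A → Matrix (Fin 2) (Fin 2) ℂ | IsKChar α w} :=
  krein_character_space_compact_hausdorff_general α
end
end

section
/- Let (A, α) be a unital commutative imprimitive Kreĭn C*-algebra with fundamental symmetry α, and let w⁰ : A₊ → ℂ be a character of the commutative unital C*-algebra A₊ (a unital ℂ-linear multiplicative map with w⁰(a*) = conj(w⁰(a)) for all a ∈ A₊). Then there exists a character w on (A, α) extending w⁰ on the even part, i.e. w(a) = w⁰(a)·1_𝕂 for all a ∈ A₊. -/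
noncomputable section

/-- `(A, α)` is imprimitive (full): the norm-closure of the linear span of the products of
odd elements is the whole even part. -/
def Imprimitive {A : Type*} [NormedRing A] [NormedAlgebra ℂ A]
    (α : A → A) : Prop :=
  closure ((Submodule.span ℂ {z : A | ∃ x y, α x = -x ∧ α y = -y ∧ z = x * y} :
      Submodule ℂ A) : Set A)
    = {x : A | α x = x}

/-!
Diagonalising `T_{a,b}` (eigenvalues `a + b` and `a - b`) identifies `𝕂` with `ℂ × ℂ`, the
involution becoming `(p, q) ↦ (conj q, conj p)` and `γ` the swap of the factors. Hence
`x ↦ (χ x, χ (α x))` is a character on `(A, α)` as soon as `χ : A → ℂ` is a unital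
homomorphism with `χ (α (x*)) = conj (χ x)`, i.e. a character of the C⋆-algebra `(A, ♯)` with
`x♯ = α (x*)`; the identity `‖α (x*) x‖ = ‖x‖²` is its C⋆-identity.

To build `χ`, extend `w⁰` by zero on odd elements: `φ = w⁰ ∘ (1 + α) / 2`. Since `1` is a limit
of sums of products of odd elements and units are open, `φ (x y) ≠ 0` for some odd `x`, `y`, and
polarisation yields an odd `v` with `v* = -v` and `φ (v²) ≠ 0`. Such a `v` is `♯`-self-adjoint
and `φ (v²)` lies in the spectrum of `v²`, so `φ (v²) = c²` with `c` real and nonzero. Then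
`χ x = φ x + φ (x v) / c` is multiplicative on even and odd elements, hence on all of `A`.
-/

open ComplexConjugate

def Kpair (p q : ℂ) : Matrix (Fin 2) (Fin 2) ℂ :=
  !![(p + q) / 2, (p - q) / 2; (p - q) / 2, (p + q) / 2]

theorem Kmem_Kpair (p q : ℂ) : Kmem (Kpair p q) := ⟨rfl, rfl⟩

theorem Kpair_add_Kpair (p q p' q' : ℂ) :
    Kpair p q + Kpair p' q' = Kpair (p + p') (q + q') := by
  ext i j; fin_cases i <;> fin_cases j <;> simp [Kpair] <;> ring

theorem smul_Kpair (c p q : ℂ) : c • Kpair p q = Kpair (c * p) (c * q) := by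
  ext i j; fin_cases i <;> fin_cases j <;> simp [Kpair] <;> ring

theorem Kpair_mul_Kpair (p q p' q' : ℂ) : Kpair p q * Kpair p' q' = Kpair (p * p') (q * q') := by
  ext i j; fin_cases i <;> fin_cases j <;> simp [Kpair, Matrix.mul_apply] <;> ring

theorem Kpair_self (p : ℂ) : Kpair p p = p • 1 := by
  ext i j; fin_cases i <;> fin_cases j <;> simp [Kpair]

theorem Kst_Kpair (p q : ℂ) : Kst (Kpair p q) = Kpair (conj q) (conj p) := by
  ext i j; fin_cases i <;> fin_cases j <;> simp [Kst, Kpair, map_div₀, map_ofNat] <;> ring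

theorem Kgamma_Kpair (p q : ℂ) : Kgamma (Kpair p q) = Kpair q p := by
  ext i j; fin_cases i <;> fin_cases j <;> simp [Kgamma, Kpair] <;> ring

theorem isKChar_Kpair {A : Type*} [NormedRing A] [NormedAlgebra ℂ A] [StarRing A]
    (σ : A →⋆ₐ[ℂ] A) (hσ : Function.Involutive σ) (χ : A →ₐ[ℂ] ℂ)
    (hχ : ∀ x, χ (σ (star x)) = conj (χ x)) :
    IsKChar σ (fun x => Kpair (χ x) (χ (σ x))) := by
  refine ⟨fun x => Kmem_Kpair _ _, fun x y => ?_, fun c x => ?_, fun x y => ?_, ?_,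
    fun x => ?_, fun x => ?_⟩
  · simp only [map_add, Kpair_add_Kpair]
  · simp only [map_smul, smul_eq_mul, smul_Kpair]
  · simp only [map_mul, Kpair_mul_Kpair]
  · simp only [map_one, Kpair_self, one_smul]
  · dsimp only
    rw [Kst_Kpair, ← hχ x, ← hχ (σ x), map_star σ (σ x), hσ]
  · dsimp only
    rw [Kgamma_Kpair, hσ]

def StarAlgHom.ofInvolutive {R A : Type*} [CommSemiring R] [Semiring A] [Algebra R A] [Star A]
    (α : A → A) (hadd : ∀ x y, α (x + y) = α x + α y) (hsmul : ∀ (c : R) x, α (c • x) = c • α x)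
    (hmul : ∀ x y, α (x * y) = α x * α y) (hstar : ∀ x, α (star x) = star (α x))
    (hinvol : ∀ x, α (α x) = x) : A →⋆ₐ[R] A :=
  have map_one : α 1 = 1 := calc
    α 1 = α 1 * α (α 1) := by rw [hinvol, mul_one]
    _ = 1 := by rw [← hmul, one_mul, hinvol]
  let f : A →+* A :=
    { toFun := α, map_one' := map_one, map_mul' := hmul,
      map_zero' := by simpa using hsmul 0 0, map_add' := hadd }
  { AlgHom.mk' f hsmul with map_star' := hstar }

theorem IsSelfAdjoint.exists_sq_eq_of_mem_spectrum_mul_self {E : Type*} [CStarAlgebra E] {u : E}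
    (hu : IsSelfAdjoint u) {z : ℂ} (hz : z ∈ spectrum ℂ (u * u)) : ∃ y : ℝ, z = (y : ℂ) ^ 2 := by
  rw [← sq, spectrum.map_pow_of_pos u two_pos] at hz
  obtain ⟨y, hy, rfl⟩ := hz
  exact ⟨y.re, by rw [← hu.mem_spectrum_eq_re hy]⟩

theorem map_mul_eq_zero_of_map_mul_self {𝕜 R : Type*} [Field 𝕜] [CharZero 𝕜] [CommRing R]
    [Algebra 𝕜 R] (φ : R →ₗ[𝕜] 𝕜) {M : AddSubgroup R} (h : ∀ x ∈ M, φ (x * x) = 0) {x y : R}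
    (hx : x ∈ M) (hy : y ∈ M) : φ (x * y) = 0 := by
  have key : (x + y) * (x + y) - (x - y) * (x - y) = (4 : 𝕜) • (x * y) := by
    rw [Algebra.smul_def, map_ofNat]; ring
  have := congrArg φ key
  rw [map_sub, h _ (M.add_mem hx hy), h _ (M.sub_mem hx hy), map_smul, smul_eq_mul] at this
  simpa using this.symm

def twist {A : Type*} [Ring A] [Algebra ℂ A] (φ : A →ₗ[ℂ] ℂ) (v : A) (c : ℂ) : A →ₗ[ℂ] ℂ :=
  φ + c⁻¹ • φ ∘ₗ LinearMap.mulRight ℂ v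

theorem twist_apply {A : Type*} [Ring A] [Algebra ℂ A] (φ : A →ₗ[ℂ] ℂ) (v : A) (c : ℂ) (x : A) :
    twist φ v c x = φ x + c⁻¹ * φ (x * v) := rfl

section FundamentalSymmetry

variable {A : Type*} [NormedCommRing A] [NormedAlgebra ℂ A] [StarRing A] (σ : A →⋆ₐ[ℂ] A)

abbrev sharpCStarAlgebra [StarModule ℂ A] [CompleteSpace A] (hσ : Function.Involutive σ)
    (hC : ∀ x, ‖σ (star x) * x‖ = ‖x‖ ^ 2) : CStarAlgebra A where
  toNormedRing := inferInstance
  toCompleteSpace := inferInstance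
  toNormedAlgebra := inferInstance
  star x := σ (star x)
  star_involutive x := by
    show σ (star (σ (star x))) = x
    rw [← map_star, hσ, star_star]
  star_mul x y := by rw [star_mul, map_mul]
  star_add x y := by rw [star_add, map_add]
  star_smul c x := by rw [star_smul, map_smul]
  norm_mul_self_le x := by
    show ‖x‖ * ‖x‖ ≤ ‖σ (star x) * x‖
    rw [hC, sq]

theorem exists_sq_eq_of_mem_spectrum_mul_self [StarModule ℂ A] [CompleteSpace A]
    (hσ : Function.Involutive σ) (hC : ∀ x, ‖σ (star x) * x‖ = ‖x‖ ^ 2) {u : A}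
    (hu : σ (star u) = u) {z : ℂ} (hz : z ∈ spectrum ℂ (u * u)) : ∃ y : ℝ, z = (y : ℂ) ^ 2 :=
  letI := sharpCStarAlgebra σ hσ hC
  IsSelfAdjoint.exists_sq_eq_of_mem_spectrum_mul_self hu hz

theorem induction_even_odd (hσ : Function.Involutive σ) {p : A → Prop}
    (even : ∀ a, σ a = a → p a) (odd : ∀ o, σ o = -o → p o)
    (add : ∀ x y, p x → p y → p (x + y)) (x : A) : p x := by
  have hx : x = (2⁻¹ : ℂ) • (x + σ x) + (2⁻¹ : ℂ) • (x - σ x) := by module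
  rw [hx]
  refine add _ _ (even _ ?_) (odd _ ?_)
  · rw [map_smul, map_add, hσ, add_comm]
  · rw [map_smul, map_sub, hσ, ← smul_neg, neg_sub]

def evenPart : A →ₗ[ℂ] A := (2⁻¹ : ℂ) • (LinearMap.id + σ.toAlgHom.toLinearMap)

theorem evenPart_apply (x : A) : evenPart σ x = (2⁻¹ : ℂ) • (x + σ x) := rfl

theorem map_evenPart (hσ : Function.Involutive σ) (x : A) :
    σ (evenPart σ x) = evenPart σ x := by
  rw [evenPart_apply, map_smul, map_add, hσ, add_comm]

theorem evenPart_of_even {a : A} (ha : σ a = a) : evenPart σ a = a := by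
  rw [evenPart_apply, ha]; module

theorem evenPart_of_odd {o : A} (ho : σ o = -o) : evenPart σ o = 0 := by
  rw [evenPart_apply, ho, add_neg_cancel, smul_zero]

theorem evenPart_star [StarModule ℂ A] (x : A) : evenPart σ (star x) = star (evenPart σ x) := by
  rw [evenPart_apply, evenPart_apply, star_smul, star_add, map_star, star_inv₀, star_ofNat]

def oddSubmodule : Submodule ℂ A where
  carrier := {x | σ x = -x}
  add_mem' {x y} (hx : σ x = -x) (hy : σ y = -y) := by
    show σ (x + y) = -(x + y)
    rw [map_add, hx, hy, neg_add]
  zero_mem' := by simp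
  smul_mem' c x (hx : σ x = -x) := by
    show σ (c • x) = -(c • x)
    rw [map_smul, hx, smul_neg]

open Complex in
theorem exists_skew_add_I_smul [StarModule ℂ A] {x : A} (hx : σ x = -x) :
    ∃ x₁ x₂ : A, (σ x₁ = -x₁ ∧ star x₁ = -x₁) ∧ (σ x₂ = -x₂ ∧ star x₂ = -x₂) ∧
      x = x₁ + I • x₂ := by
  have hxs : σ (star x) = -star x := by rw [map_star, hx, star_neg]
  refine ⟨(2⁻¹ : ℂ) • (x - star x), (-(2⁻¹ * I) : ℂ) • (x + star x), ⟨?_, ?_⟩, ⟨?_, ?_⟩, ?_⟩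
  · rw [map_smul, map_sub, hx, hxs]; module
  · rw [star_smul, star_sub, star_star, star_inv₀, star_ofNat]; module
  · rw [map_smul, map_add, hx, hxs]; module
  · rw [star_smul, star_add, star_star, star_neg, star_mul', star_inv₀, star_ofNat,
      Complex.star_def, conj_I]
    module
  · rw [smul_smul, show I * -(2⁻¹ * I) = 2⁻¹ by linear_combination (-2⁻¹ : ℂ) * I_mul_I]; module

structure IsEvenChar (φ : A →ₗ[ℂ] ℂ) : Prop where
  apply_one : φ 1 = 1
  apply_of_odd : ∀ x, σ x = -x → φ x = 0
  apply_mul : ∀ a b, σ a = a → σ b = b → φ (a * b) = φ a * φ b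
  apply_star : ∀ x, φ (star x) = conj (φ x)

section EvenExtension

variable (hσ : Function.Involutive σ) (w₀ : A → ℂ)
  (hadd : ∀ a b, σ a = a → σ b = b → w₀ (a + b) = w₀ a + w₀ b)
  (hsmul : ∀ (c : ℂ) a, σ a = a → w₀ (c • a) = c * w₀ a)

def evenExtension : A →ₗ[ℂ] ℂ where
  toFun x := w₀ (evenPart σ x)
  map_add' x y := by rw [map_add, hadd _ _ (map_evenPart σ hσ x) (map_evenPart σ hσ y)]
  map_smul' c x := by
    rw [map_smul, hsmul _ _ (map_evenPart σ hσ x), smul_eq_mul, RingHom.id_apply]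

theorem evenExtension_apply_of_even {a : A} (ha : σ a = a) :
    evenExtension σ hσ w₀ hadd hsmul a = w₀ a :=
  congrArg w₀ (evenPart_of_even σ ha)

theorem isEvenChar_evenExtension [StarModule ℂ A] (hone : w₀ 1 = 1)
    (hmul : ∀ a b, σ a = a → σ b = b → w₀ (a * b) = w₀ a * w₀ b)
    (hstar : ∀ a, σ a = a → w₀ (star a) = conj (w₀ a)) :
    IsEvenChar σ (evenExtension σ hσ w₀ hadd hsmul) where
  apply_one := by rw [evenExtension_apply_of_even σ hσ w₀ hadd hsmul (map_one σ), hone]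
  apply_of_odd o ho := by
    show w₀ (evenPart σ o) = 0
    rw [evenPart_of_odd σ ho]
    simpa using hsmul 0 0 (map_zero σ)
  apply_mul a b ha hb := by
    simp only [evenExtension_apply_of_even σ hσ w₀ hadd hsmul, ha, hb, map_mul, hmul a b ha hb]
  apply_star x := by
    show w₀ (evenPart σ (star x)) = conj (w₀ (evenPart σ x))
    rw [evenPart_star, hstar _ (map_evenPart σ hσ x)]

end EvenExtension

namespace IsEvenChar

variable {σ} {φ : A →ₗ[ℂ] ℂ}

theorem apply_algebraMap (hφ : IsEvenChar σ φ) (c : ℂ) : φ (algebraMap ℂ A c) = c := by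
  rw [Algebra.algebraMap_eq_smul_one, map_smul, hφ.apply_one, smul_eq_mul, mul_one]

theorem ne_zero_of_isUnit (hφ : IsEvenChar σ φ) {b : A} (hb : σ b = b) (hu : IsUnit b) :
    φ b ≠ 0 := by
  obtain ⟨u, rfl⟩ := hu
  have hinv : σ ↑u⁻¹ = ↑u⁻¹ := by
    have hσu : Units.map (σ : A →* A) u = u := Units.ext hb
    calc σ ↑u⁻¹ = ↑(Units.map (σ : A →* A) u)⁻¹ := rfl
      _ = ↑u⁻¹ := by rw [hσu]
  intro h0
  have := hφ.apply_mul _ _ hb hinv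
  rw [u.mul_inv, hφ.apply_one, h0, zero_mul] at this
  exact one_ne_zero this

theorem apply_mem_spectrum (hφ : IsEvenChar σ φ) {b : A} (hb : σ b = b) :
    φ b ∈ spectrum ℂ b := by
  refine fun hu => hφ.ne_zero_of_isUnit ?_ hu ?_
  · rw [map_sub, AlgHomClass.commutes, hb]
  · rw [map_sub, hφ.apply_algebraMap, sub_self]

theorem exists_odd_mul_ne_zero [CompleteSpace A] (hφ : IsEvenChar σ φ) (himp : Imprimitive σ) :
    ∃ x y, σ x = -x ∧ σ y = -y ∧ φ (x * y) ≠ 0 := by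
  by_contra! h
  rw [Imprimitive] at himp
  set P := Submodule.span ℂ {z : A | ∃ x y, σ x = -x ∧ σ y = -y ∧ z = x * y}
  have hP : P ≤ LinearMap.ker φ :=
    Submodule.span_le.2 (by rintro _ ⟨x, y, hx, hy, rfl⟩; exact h x y hx hy)
  have h1 : (1 : A) ∈ closure (P : Set A) := by
    rw [himp]
    exact map_one σ
  obtain ⟨s, hsU, hsP⟩ := mem_closure_iff.1 h1 _ Units.isOpen isUnit_one
  exact hφ.ne_zero_of_isUnit (himp.subset (subset_closure hsP)) hsU (hP hsP)

open Complex in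
theorem exists_skew_odd_mul_self_ne_zero [StarModule ℂ A] [CompleteSpace A]
    (hφ : IsEvenChar σ φ) (himp : Imprimitive σ) :
    ∃ v, σ v = -v ∧ star v = -v ∧ φ (v * v) ≠ 0 := by
  by_contra! h
  let S := (oddSubmodule σ).toAddSubgroup ⊓ skewAdjoint A
  have hS : ∀ x ∈ S, ∀ y ∈ S, φ (x * y) = 0 := fun x hx y hy =>
    map_mul_eq_zero_of_map_mul_self φ (fun z (hz : z ∈ S) => h z hz.1 hz.2) hx hy
  have hodd : ∀ x ∈ (oddSubmodule σ).toAddSubgroup, φ (x * x) = 0 := by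
    intro x hx
    obtain ⟨x₁, x₂, hx₁, hx₂, rfl⟩ := exists_skew_add_I_smul σ hx
    have hsq : (x₁ + I • x₂) * (x₁ + I • x₂) = x₁ * x₁ + (2 * I) • (x₁ * x₂) - x₂ * x₂ := by
      have hI : algebraMap ℂ A I * algebraMap ℂ A I = -1 := by
        rw [← map_mul, I_mul_I, map_neg, map_one]
      simp only [Algebra.smul_def, map_mul, map_ofNat]
      linear_combination (x₂ * x₂) * hI
    rw [hsq, map_sub, map_add, map_smul, hS _ hx₁ _ hx₁, hS _ hx₁ _ hx₂, hS _ hx₂ _ hx₂]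
    simp
  obtain ⟨x, y, hx, hy, hxy⟩ := hφ.exists_odd_mul_ne_zero himp
  exact hxy (map_mul_eq_zero_of_map_mul_self φ hodd hx hy)

end IsEvenChar

variable {φ : A →ₗ[ℂ] ℂ} {v : A}

namespace IsEvenChar

variable {σ}

theorem twist_of_even (hφ : IsEvenChar σ φ) (hv : σ v = -v) (c : ℂ) {a : A} (ha : σ a = a) :
    twist φ v c a = φ a := by
  rw [twist_apply, hφ.apply_of_odd (a * v) (by rw [map_mul, ha, hv, mul_neg]), mul_zero,
    add_zero]

theorem twist_of_odd (hφ : IsEvenChar σ φ) (c : ℂ) {o : A} (ho : σ o = -o) :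
    twist φ v c o = c⁻¹ * φ (o * v) := by
  rw [twist_apply, hφ.apply_of_odd o ho, zero_add]

theorem twist_mul (hφ : IsEvenChar σ φ) (hσ : Function.Involutive σ) (hv : σ v = -v) {c : ℂ}
    (hc : c ≠ 0) (hvc : φ (v * v) = c ^ 2) (x y : A) :
    twist φ v c (x * y) = twist φ v c x * twist φ v c y := by
  have hmul_v : ∀ o, σ o = -o → σ (o * v) = o * v := fun o ho => by
    rw [map_mul, ho, hv, neg_mul_neg]
  have even_odd : ∀ a o, σ a = a → σ o = -o →
      twist φ v c (a * o) = twist φ v c a * twist φ v c o := by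
    intro a o ha ho
    rw [hφ.twist_of_odd c (by rw [map_mul, ha, ho, mul_neg]), hφ.twist_of_even hv c ha,
      hφ.twist_of_odd c ho, mul_assoc, hφ.apply_mul _ _ ha (hmul_v o ho)]
    ring
  have odd_odd : ∀ o o', σ o = -o → σ o' = -o' →
      twist φ v c (o * o') = twist φ v c o * twist φ v c o' := by
    intro o o' ho ho'
    have hoo' : σ (o * o') = o * o' := by rw [map_mul, ho, ho', neg_mul_neg]
    have key := hφ.apply_mul _ _ (hmul_v o ho) (hmul_v o' ho')
    rw [show o * v * (o' * v) = o * o' * (v * v) by ring,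
      hφ.apply_mul _ _ hoo' (by rw [map_mul, hv, neg_mul_neg]), hvc] at key
    rw [hφ.twist_of_even hv c hoo', hφ.twist_of_odd c ho, hφ.twist_of_odd c ho',
      mul_mul_mul_comm, ← key]
    field_simp
  induction x using induction_even_odd σ hσ with
  | even a ha =>
    induction y using induction_even_odd σ hσ with
    | even b hb =>
      rw [hφ.twist_of_even hv c (by rw [map_mul, ha, hb]), hφ.twist_of_even hv c ha,
        hφ.twist_of_even hv c hb, hφ.apply_mul a b ha hb]
    | odd o ho => exact even_odd a o ha ho
    | add y y' hy hy' => rw [mul_add, map_add, hy, hy', map_add, mul_add]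
  | odd o ho =>
    induction y using induction_even_odd σ hσ with
    | even b hb => rw [mul_comm, even_odd b o hb ho, mul_comm]
    | odd o' ho' => exact odd_odd o o' ho ho'
    | add y y' hy hy' => rw [mul_add, map_add, hy, hy', map_add, mul_add]
  | add x x' hx hx' => rw [add_mul, map_add, hx, hx', map_add, add_mul]

theorem twist_sharp (hφ : IsEvenChar σ φ) (hσ : Function.Involutive σ) (hv : σ v = -v)
    (hvs : star v = -v) (c : ℝ) (x : A) :
    twist φ v c (σ (star x)) = conj (twist φ v c x) := by
  induction x using induction_even_odd σ hσ with
  | even a ha =>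
    rw [map_star, ha, hφ.twist_of_even hv c (by rw [map_star, ha]), hφ.twist_of_even hv c ha,
      hφ.apply_star]
  | odd o ho =>
    have hos : σ (star o) = -star o := by rw [map_star, ho, star_neg]
    have hstar : star o * v = -star (o * v) := by rw [star_mul, hvs, neg_mul, neg_neg, mul_comm]
    rw [hos, map_neg, hφ.twist_of_odd c hos, hφ.twist_of_odd c ho, hstar, map_neg,
      hφ.apply_star, map_mul (starRingEnd ℂ), map_inv₀, Complex.conj_ofReal]
    ring
  | add x x' hx hx' => rw [star_add, map_add, map_add, hx, hx', map_add, map_add]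

theorem exists_sharp_algHom [StarModule ℂ A] [CompleteSpace A] (hφ : IsEvenChar σ φ)
    (hσ : Function.Involutive σ) (hC : ∀ x, ‖σ (star x) * x‖ = ‖x‖ ^ 2) (himp : Imprimitive σ) :
    ∃ χ : A →ₐ[ℂ] ℂ, (∀ x, χ (σ (star x)) = conj (χ x)) ∧ ∀ a, σ a = a → χ a = φ a := by
  obtain ⟨v, hv, hvs, hvv⟩ := hφ.exists_skew_odd_mul_self_ne_zero himp
  have hsharp : σ (star v) = v := by rw [hvs, map_neg, hv, neg_neg]
  have heven : σ (v * v) = v * v := by rw [map_mul, hv, neg_mul_neg]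
  obtain ⟨c, hc⟩ :=
    exists_sq_eq_of_mem_spectrum_mul_self σ hσ hC hsharp (hφ.apply_mem_spectrum heven)
  have hc0 : (c : ℂ) ≠ 0 := by
    rintro hc0
    rw [hc0, zero_pow two_ne_zero] at hc
    exact hvv hc
  refine ⟨AlgHom.ofLinearMap (twist φ v c) (by rw [hφ.twist_of_even hv c (map_one σ),
    hφ.apply_one]) (hφ.twist_mul hσ hv hc0 hc), hφ.twist_sharp hσ hv hvs c,
    fun a ha => hφ.twist_of_even hv c ha⟩

end IsEvenChar

end FundamentalSymmetry

/-- Every character `w⁰` of the even part of a unital commutative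
imprimitive Kreĭn C*-algebra extends to a character `w` of `(A, α)` with
`w a = w⁰ a • 1` for all `a ∈ A₊`. -/
theorem krein_character_extension {A : Type*} [NormedRing A] [NormedAlgebra ℂ A]
    [StarRing A] [StarModule ℂ A] [CompleteSpace A]
(α : A → A)
    (hadd : ∀ x y : A, α (x + y) = α x + α y)
    (hsmul : ∀ (c : ℂ) (x : A), α (c • x) = c • α x)
    (hmul : ∀ x y : A, α (x * y) = α x * α y)
    (hstar : ∀ x : A, α (star x) = star (α x))
    (hinvol : ∀ x : A, α (α x) = x)
    (hfs : ∀ x : A, ‖α (star x) * x‖ = ‖x‖ ^ 2)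
    (hcomm : ∀ x y : A, x * y = y * x)
    (himp : Imprimitive α)
    (w₀ : A → ℂ)
    (h₀one : w₀ 1 = 1)
    (h₀add : ∀ a b : A, α a = a → α b = b → w₀ (a + b) = w₀ a + w₀ b)
    (h₀smul : ∀ (c : ℂ) (a : A), α a = a → w₀ (c • a) = c * w₀ a)
    (h₀mul : ∀ a b : A, α a = a → α b = b → w₀ (a * b) = w₀ a * w₀ b)
    (h₀star : ∀ a : A, α a = a → w₀ (star a) = starRingEnd ℂ (w₀ a)) :
    ∃ w : A → Matrix (Fin 2) (Fin 2) ℂ, IsKChar α w ∧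
      ∀ a : A, α a = a → w a = w₀ a • (1 : Matrix (Fin 2) (Fin 2) ℂ) := by
  let _ : NormedCommRing A := { ‹NormedRing A› with mul_comm := hcomm }
  let σ : A →⋆ₐ[ℂ] A := StarAlgHom.ofInvolutive α hadd hsmul hmul hstar hinvol
  have hφ := isEvenChar_evenExtension σ hinvol w₀ h₀add h₀smul h₀one h₀mul h₀star
  obtain ⟨χ, hχ, hχφ⟩ := hφ.exists_sharp_algHom hinvol hfs himp
  refine ⟨fun x => Kpair (χ x) (χ (α x)), isKChar_Kpair σ hinvol χ hχ, fun a ha => ?_⟩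
  show Kpair (χ a) (χ (α a)) = _
  rw [ha, Kpair_self, hχφ a ha, evenExtension_apply_of_even σ hinvol w₀ h₀add h₀smul ha]
end
end
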